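/- arXiv:2001.00213 — 11 statements merged into one kernel-verified Lean document; each statement's English description precedes it below -/
import Mathlib

section
/- Let p be a prime and k, ℓ ≥ 1. If a finite group G contains a subgroup H isomorphic to the elementary abelian group (ZMod p)^k (the direct product of k copies of the cyclic group of order p) and a subgroup K isomorphic to the cyclic group ZMod (p^ℓ), then p^(k+ℓ−1) divides the order of G. -/
open scoped Pointwise

open Finset in
lemma aux_card_mul_le {G : Type*} [Group G] [Fintype G] (A B Q : Subgroup G)
    (hA : A ≤ Q) (hB : B ≤ Q) :
    Nat.card A * Nat.card B ≤ Nat.card Q * Nat.card (A ⊓ B : Subgroup G) := by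
  classical
  simp only [Nat.card_eq_fintype_card]
  rw [← Fintype.card_prod]
  have key : (Finset.univ : Finset (A × B)).card ≤
      Fintype.card (A ⊓ B : Subgroup G) * (Q : Set G).toFinset.card := by
    apply Finset.card_le_mul_card_image_of_maps_to
      (f := fun x : A × B => (x.1 : G) * (x.2 : G))
    · intro a _
      simp only [Set.mem_toFinset]
      exact Q.mul_mem (hA a.1.2) (hB a.2.2)
    · intro b _
      set s := (Finset.univ.filter
        (fun a : A × B => (a.1 : G) * (a.2 : G) = b)) with hs
      by_cases hne : s.Nonempty
      · obtain ⟨a₀, ha₀⟩ := hne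
        rw [hs, Finset.mem_filter] at ha₀
        have hinj : Function.Injective
            (fun x : {y : A × B // (y.1 : G) * (y.2 : G) = b} =>
            (⟨(a₀.1 : G)⁻¹ * (x.1.1 : G), by
              refine ⟨A.mul_mem (A.inv_mem a₀.1.2) x.1.1.2, ?_⟩
              have h : (x.1.1 : G) * (x.1.2 : G) = (a₀.1 : G) * (a₀.2 : G) :=
                x.2.trans ha₀.2.symm
              have h1 : (a₀.1 : G)⁻¹ * (x.1.1 : G) = (a₀.2 : G) * (x.1.2 : G)⁻¹ := by
                rw [inv_mul_eq_iff_eq_mul, ← mul_assoc, ← h, mul_assoc,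
                  mul_inv_cancel, mul_one]
              rw [h1]
              exact B.mul_mem a₀.2.2 (B.inv_mem x.1.2.2)⟩ : (A ⊓ B : Subgroup G))) := by
          intro x y hxy
          have h1 : (x.1.1 : G) = (y.1.1 : G) := by
            have := congrArg (fun z : (A ⊓ B : Subgroup G) => (z : G)) hxy
            simpa using mul_left_cancel this
          have h11 : x.1.1 = y.1.1 := Subtype.ext h1
          have h2 : x.1.2 = y.1.2 := by
            apply Subtype.ext
            have hb : (x.1.1 : G) * (x.1.2 : G) = (y.1.1 : G) * (y.1.2 : G) :=
              x.2.trans y.2.symm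
            rw [h1] at hb
            exact mul_left_cancel hb
          exact Subtype.ext (Prod.ext h11 h2)
        calc s.card = Fintype.card {y : A × B // (y.1 : G) * (y.2 : G) = b} :=
              (Fintype.card_subtype _).symm
          _ ≤ Fintype.card (A ⊓ B : Subgroup G) := Fintype.card_le_of_injective _ hinj
      · rw [Finset.not_nonempty_iff_eq_empty] at hne
        simp [hne]
  calc Fintype.card (A × B) = (Finset.univ : Finset (A × B)).card :=
        Finset.card_univ.symm
    _ ≤ Fintype.card (A ⊓ B : Subgroup G) * (Q : Set G).toFinset.card := key
    _ = Fintype.card Q * Fintype.card (A ⊓ B : Subgroup G) := by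
        rw [Set.toFinset_card, mul_comm]
        rfl

/-- If a finite group `G` contains a subgroup isomorphic to the
elementary abelian group `(ZMod p)^k` and a subgroup isomorphic to the cyclic
group `ZMod (p^ℓ)`, then `p^(k+ℓ-1)` divides `|G|`. -/
theorem stmt_1 (p : ℕ) (hp : p.Prime) (k ℓ : ℕ) (hk : 1 ≤ k) (hℓ : 1 ≤ ℓ)
    {G : Type*} [Group G] [Fintype G]
    (H K : Subgroup G)
    (hH : Nonempty (H ≃* Multiplicative (Fin k → ZMod p)))
    (hK : Nonempty (K ≃* Multiplicative (ZMod (p ^ ℓ)))) :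
    p ^ (k + ℓ - 1) ∣ Fintype.card G := by
  classical
  haveI : Fact p.Prime := ⟨hp⟩
  obtain ⟨eH⟩ := hH
  obtain ⟨eK⟩ := hK
  -- cardinalities
  have cardH : Nat.card H = p ^ k := by
    rw [Nat.card_congr eH.toEquiv]
    show Nat.card (Fin k → ZMod p) = p ^ k
    simp [Nat.card_pi, Nat.card_zmod]
  have cardK : Nat.card K = p ^ ℓ := by
    rw [Nat.card_congr eK.toEquiv]
    show Nat.card (ZMod (p ^ ℓ)) = p ^ ℓ
    simp [Nat.card_zmod]
  -- every element of H has p-th power 1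
  have hHexp : ∀ h : H, h ^ p = 1 := by
    intro h
    apply eH.injective
    rw [map_pow, map_one]
    show (eH h) ^ p = 1
    have : ∀ v : Multiplicative (Fin k → ZMod p), v ^ p = 1 := by
      intro v
      show Multiplicative.ofAdd (p • v.toAdd) = 1
      have : p • v.toAdd = 0 := by
        funext i
        simp [nsmul_eq_mul, ZMod.natCast_self]
      rw [this]; rfl
    exact this _
  -- p-groups
  have hpH : IsPGroup p H := IsPGroup.of_card cardH
  have hpK : IsPGroup p K := IsPGroup.of_card cardK
  obtain ⟨Q, hHQ⟩ := hpH.exists_le_sylow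
  obtain ⟨R, hKR⟩ := hpK.exists_le_sylow
  obtain ⟨g, hg⟩ := MulAction.exists_smul_eq G R Q
  -- conjugate K into Q
  set K' : Subgroup G := MulAut.conj g • K with hK'
  have hK'Q : K' ≤ Q := by
    have h1 : MulAut.conj g • K ≤ MulAut.conj g • R.toSubgroup :=
      Subgroup.pointwise_smul_le_pointwise_smul_iff.mpr hKR
    have h2 : MulAut.conj g • R.toSubgroup = Q.toSubgroup := by
      rw [← hg, Sylow.smul_def, Sylow.pointwise_smul_def]
    exact h1.trans h2.le
  have eK' : K ≃* K' := Subgroup.equivSMul (MulAut.conj g) K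
  have cardK' : Nat.card K' = p ^ ℓ := by
    rw [← Nat.card_congr eK'.toEquiv, cardK]
  haveI : IsCyclic K' :=
    isCyclic_of_surjective (eK'.toMonoidHom.comp eK.symm.toMonoidHom)
      (eK'.surjective.comp eK.symm.surjective)
  -- the intersection has cardinality dividing p
  have hIle : H ⊓ K' ≤ K' := inf_le_right
  haveI : IsCyclic ((H ⊓ K').subgroupOf K') := Subgroup.isCyclic _
  haveI : IsCyclic (H ⊓ K' : Subgroup G) :=
    isCyclic_of_surjective (Subgroup.subgroupOfEquivOfLe hIle).toMonoidHom
      (Subgroup.subgroupOfEquivOfLe hIle).surjective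
  have cardI_dvd : Nat.card (H ⊓ K' : Subgroup G) ∣ p := by
    obtain ⟨x, hx⟩ := IsCyclic.exists_generator (α := (H ⊓ K' : Subgroup G))
    have hxp : x ^ p = 1 := by
      have hxH : (x : G) ∈ H := x.2.1
      have := hHexp ⟨(x : G), hxH⟩
      apply Subtype.ext
      have := congrArg (fun z : H => (z : G)) this
      simpa using this
    have hcard : Nat.card (H ⊓ K' : Subgroup G) = orderOf x := by
      exact (orderOf_eq_card_of_forall_mem_zpowers hx).symm
    rw [hcard]
    exact orderOf_dvd_of_pow_eq_one hxp
  have cardI_le : Nat.card (H ⊓ K' : Subgroup G) ≤ p :=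
    Nat.le_of_dvd hp.pos cardI_dvd
  -- Q is a p-group of some order p^n
  obtain ⟨n, hn⟩ := Q.2.exists_card_eq
  -- the key inequality
  have hmain : p ^ (k + ℓ) ≤ p ^ n * p := by
    calc p ^ (k + ℓ) = p ^ k * p ^ ℓ := pow_add p k ℓ
      _ = Nat.card H * Nat.card K' := by rw [cardH, cardK']
      _ ≤ Nat.card Q * Nat.card (H ⊓ K' : Subgroup G) := aux_card_mul_le H K' Q hHQ hK'Q
      _ ≤ p ^ n * p := by
          rw [hn]
          exact Nat.mul_le_mul_left _ cardI_le
  have hexp : k + ℓ - 1 ≤ n := by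
    have : p ^ (k + ℓ) ≤ p ^ (n + 1) := by rw [pow_succ]; exact hmain
    have hle : k + ℓ ≤ n + 1 := (Nat.pow_le_pow_iff_right hp.one_lt).mp this
    omega
  have : p ^ (k + ℓ - 1) ∣ p ^ n := pow_dvd_pow p hexp
  calc p ^ (k + ℓ - 1) ∣ p ^ n := this
    _ = Nat.card Q := hn.symm
    _ ∣ Nat.card G := Subgroup.card_subgroup_dvd_card _
    _ = Fintype.card G := Nat.card_eq_fintype_card
end

section
/- Let p be a prime and n > 1 with (p, n) ≠ (2, 2). Then there is no bijection φ : ZMod (p^n) → (Fin n → ZMod p) whose pullback of the Hamming distance is translation invariant; that is, there is no bijection φ such that hammingDist(φ(x + c), φ(y + c)) = hammingDist(φ x, φ y) for all x, y, c ∈ ZMod (p^n). Equivalently, there is no translation-invariant metric d on the cyclic group ZMod (p^n) making (ZMod (p^n), d) isometric to the Hamming space ((ZMod p)^n, d_Ham). -/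
open Finset Polynomial

private lemma pow_mod_eq {M : ℕ} {z : ℂ} (hz : z ^ M = 1) (a : ℕ) : z ^ (a % M) = z ^ a := by
  conv_rhs => rw [← Nat.div_add_mod a M, pow_add, pow_mul, hz, one_pow, one_mul]

private lemma pow_congr {M : ℕ} {z : ℂ} (hz : z ^ M = 1) {A B : ℕ} (h : A % M = B % M) :
    z ^ A = z ^ B := by
  rw [← pow_mod_eq hz A, ← pow_mod_eq hz B, h]

private lemma echar_add {M : ℕ} [NeZero M] {z : ℂ} (hz : z ^ M = 1) (x y : ZMod M) :
    z ^ (x + y).val = z ^ x.val * z ^ y.val := by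
  rw [ZMod.val_add, pow_mod_eq hz, pow_add]

private lemma echar_sum {M : ℕ} [NeZero M] {z : ℂ} (hz : IsPrimitiveRoot z M) (c : ZMod M) :
    ∑ x : ZMod M, z ^ (x * c).val = if c = 0 then (M : ℂ) else 0 := by
  have hz1 : z ^ M = 1 := hz.pow_eq_one
  by_cases hc : c = 0
  · simp [hc, ZMod.val_zero, ZMod.card]
  · rw [if_neg hc]
    have hne : z ^ c.val ≠ 1 := by
      intro h1
      have : (M : ℕ) ∣ c.val := hz.dvd_of_pow_eq_one _ h1
      have hlt : c.val < M := ZMod.val_lt c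
      have hv0 : c.val = 0 := Nat.eq_zero_of_dvd_of_lt this hlt
      exact hc (by rwa [ZMod.val_eq_zero] at hv0)
    have hshift : (∑ x : ZMod M, z ^ (x * c).val) * z ^ c.val
        = ∑ x : ZMod M, z ^ (x * c).val := by
      rw [Finset.sum_mul]
      apply Fintype.sum_equiv (Equiv.addRight 1)
      intro x
      have h2 : (Equiv.addRight (1 : ZMod M)) x = x + 1 := rfl
      rw [h2, ← echar_add hz1]
      congr 1
      ring
    have hfac : (∑ x : ZMod M, z ^ (x * c).val) * (z ^ c.val - 1) = 0 := by
      rw [mul_sub, hshift, mul_one, sub_self]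
    rcases mul_eq_zero.mp hfac with h | h
    · exact h
    · exact absurd (by linear_combination h) hne

private lemma aux_mlt {p m : ℕ} (hp : 2 ≤ p) (hm : 1 ≤ m) (h : ¬(p = 2 ∧ m = 1)) :
    m + 1 < p ^ m := by
  rcases eq_or_lt_of_le hm with h1 | h1
  · have hp3 : 3 ≤ p := by
      rcases Nat.lt_or_ge p 3 with h' | h'
      · exfalso; exact h ⟨by omega, h1.symm⟩
      · exact h'
    rw [← h1, pow_one]; omega
  · have h2 : 2 ≤ m := h1
    have key : ∀ k, 2 ≤ k → k + 1 < 2 ^ k := by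
      intro k hk
      induction k with
      | zero => omega
      | succ j ih =>
        rcases Nat.lt_or_ge j 2 with hj | hj
        · have : j = 1 := by omega
          subst this; norm_num
        · have := ih hj
          have h4 : 2 ^ (j+1) = 2 * 2 ^ j := by ring
          omega
    calc m + 1 < 2 ^ m := key m h2
      _ ≤ p ^ m := Nat.pow_le_pow_left hp m

/-- For `p` prime and `n > 1` with `(p, n) ≠ (2, 2)`, there is no
bijection `φ : ZMod (p^n) → (Fin n → ZMod p)` whose pullback of the Hamming
distance is translation invariant, i.e. no isometry between `ZMod (p^n)` with a
translation-invariant metric and the Hamming space `(ZMod p)^n`. -/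
theorem stmt_2 (p n : ℕ) (hp : p.Prime) (hn : 1 < n) (hpn : ¬(p = 2 ∧ n = 2)) :
    ¬ ∃ φ : ZMod (p ^ n) ≃ (Fin n → ZMod p),
        ∀ x y c : ZMod (p ^ n),
          hammingDist (φ (x + c)) (φ (y + c)) = hammingDist (φ x) (φ y) := by
  classical
  rintro ⟨φ, H⟩
  obtain ⟨m, rfl⟩ : ∃ m, n = m + 1 := ⟨n - 1, by omega⟩
  have hp2 : 2 ≤ p := hp.two_le
  have hm1 : 1 ≤ m := by omega
  have hNpos : 0 < p ^ (m + 1) := pow_pos hp.pos _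
  haveI : NeZero (p ^ (m + 1)) := ⟨hNpos.ne'⟩
  haveI : NeZero (p ^ m) := ⟨(pow_pos hp.pos m).ne'⟩
  haveI : NeZero p := ⟨hp.pos.ne'⟩
  have hNsplit : p ^ (m + 1) = p * p ^ m := by ring
  have hmlt : m + 1 < p ^ m := aux_mlt hp2 hm1 (by omega)
  obtain ⟨ζ, hζ⟩ : ∃ ζ : ℂ, IsPrimitiveRoot ζ (p ^ (m + 1)) :=
    ⟨_, Complex.isPrimitiveRoot_exp _ hNpos.ne'⟩
  have hζ1 : ζ ^ (p ^ (m + 1)) = 1 := hζ.pow_eq_one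
  -- the agreement-counting function
  set a : ZMod (p ^ (m + 1)) → ℕ :=
    fun c => (Finset.univ.filter (fun i => φ c i = φ 0 i)).card with ha
  have hcompl : ∀ x y : ZMod (p ^ (m + 1)),
      (Finset.univ.filter (fun i => φ x i = φ y i)).card + hammingDist (φ x) (φ y) = m + 1 := by
    intro x y
    have h1 := Finset.card_filter_add_card_filter_not
      (s := (univ : Finset (Fin (m + 1)))) (p := fun i => φ x i = φ y i)
    simpa [hammingDist, Finset.card_univ] using h1
  have hagr : ∀ x y : ZMod (p ^ (m + 1)),
      (Finset.univ.filter (fun i => φ x i = φ y i)).card = a (x - y) := by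
    intro x y
    have hd : hammingDist (φ x) (φ y) = hammingDist (φ (x - y)) (φ 0) := by
      have h2 := H (x - y) 0 y
      simpa [sub_add_cancel, zero_add] using h2
    have h1 := hcompl x y
    have h2 := hcompl (x - y) 0
    rw [hd] at h1
    simp only [ha]
    omega
  have ha0 : a 0 = m + 1 := by
    simp [ha, Finset.card_univ]
  have haneg : ∀ c, a (-c) = a c := by
    intro c
    have h1 := hagr 0 c
    have h2 := hagr c 0
    have h3 : (Finset.univ.filter (fun i => φ 0 i = φ c i)).card
        = (Finset.univ.filter (fun i => φ c i = φ 0 i)).card := by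
      congr 1
      ext i
      simp only [Finset.mem_filter, Finset.mem_univ, true_and]
      exact eq_comm
    rw [zero_sub] at h1
    rw [sub_zero] at h2
    rw [← h1, h3, h2]
  have hale : ∀ c : ZMod (p ^ (m + 1)), c ≠ 0 → a c ≤ m := by
    intro c hc
    simp only [ha]
    obtain ⟨i, hi⟩ : ∃ i, φ c i ≠ φ 0 i := by
      by_contra hcon
      push_neg at hcon
      exact hc (φ.injective (funext hcon))
    have hsub : (Finset.univ.filter (fun i => φ c i = φ 0 i)) ⊆ Finset.univ.erase i := by
      intro j hj
      simp only [Finset.mem_filter] at hj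
      simp only [Finset.mem_erase, Finset.mem_univ, and_true]
      intro hji
      exact hi (hji ▸ hj.2)
    calc (Finset.univ.filter (fun i => φ c i = φ 0 i)).card
        ≤ (Finset.univ.erase i).card := Finset.card_le_card hsub
      _ = m := by simp [Finset.card_erase_of_mem, Finset.card_univ]
  -- Fourier coefficients
  set ahat : ZMod (p ^ (m + 1)) → ℂ :=
    fun j => ∑ c : ZMod (p ^ (m + 1)), (a c : ℂ) * ζ ^ (j * c).val with hahat
  set T : Finset (ZMod (p ^ (m + 1))) := univ.filter (fun j => ahat j ≠ 0) with hT
  -- indicator vectors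
  set u : Fin (m + 1) × ZMod p → (ZMod (p ^ (m + 1)) → ℂ) :=
    fun q x => if φ x q.1 = q.2 then 1 else 0 with hu
  set one : ZMod (p ^ (m + 1)) → ℂ := fun _ => 1 with hone_def
  set t : Finset (ZMod (p ^ (m + 1)) → ℂ) :=
    insert one (((univ : Finset (Fin (m + 1))) ×ˢ ((univ : Finset (ZMod p)).erase 0)).image u)
    with ht
  set U : Submodule ℂ (ZMod (p ^ (m + 1)) → ℂ) := Submodule.span ℂ (t : Set _) with hU
  have hone_mem : one ∈ U := Submodule.subset_span (Finset.mem_insert_self _ _)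
  have hu_mem : ∀ q : Fin (m + 1) × ZMod p, u q ∈ U := by
    rintro ⟨i, α⟩
    by_cases hα : α = (0 : ZMod p)
    · subst hα
      have hrepr : u (i, 0) = one - ∑ β ∈ (univ : Finset (ZMod p)).erase 0, u (i, β) := by
        funext x
        simp only [hu, hone_def, Pi.sub_apply, Finset.sum_apply]
        rw [Finset.sum_ite_eq ((univ : Finset (ZMod p)).erase 0) (φ x i) (fun _ => (1 : ℂ))]
        by_cases hx : φ x i = 0 <;> simp [hx]
      rw [hrepr]
      refine Submodule.sub_mem _ hone_mem (Submodule.sum_mem _ (fun β hβ => ?_))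
      exact Submodule.subset_span (Finset.mem_insert_of_mem
        (Finset.mem_image_of_mem u (Finset.mem_product.mpr ⟨Finset.mem_univ _, hβ⟩)))
    · exact Submodule.subset_span (Finset.mem_insert_of_mem
        (Finset.mem_image_of_mem u (Finset.mem_product.mpr
          ⟨Finset.mem_univ _, Finset.mem_erase.mpr ⟨hα, Finset.mem_univ _⟩⟩)))
  -- pointwise product identity
  have hsum_q : ∀ x y : ZMod (p ^ (m + 1)),
      ∑ q : Fin (m + 1) × ZMod p,
        (if φ y q.1 = q.2 then (1 : ℂ) else 0) * (if φ x q.1 = q.2 then 1 else 0)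
      = (a (x - y) : ℂ) := by
    intro x y
    rw [Fintype.sum_prod_type]
    have hinner : ∀ i : Fin (m + 1),
        ∑ α : ZMod p, (if φ y i = α then (1 : ℂ) else 0) * (if φ x i = α then 1 else 0)
        = if φ x i = φ y i then 1 else 0 := by
      intro i
      rw [Finset.sum_eq_single (φ y i)]
      · simp
      · intro β _ hβ
        simp [Ne.symm hβ]
      · intro hmem
        exact absurd (Finset.mem_univ _) hmem
    simp only [hinner]
    rw [Finset.sum_boole, ← hagr x y]
  -- convolution identity
  have hconv : ∀ (j x : ZMod (p ^ (m + 1))),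
      ∑ y : ZMod (p ^ (m + 1)), (a (x - y) : ℂ) * ζ ^ (j * y).val
      = ahat j * ζ ^ (j * x).val := by
    intro j x
    have hrhs : ahat j * ζ ^ (j * x).val
        = ∑ c : ZMod (p ^ (m + 1)), (a c : ℂ) * ζ ^ (j * c).val * ζ ^ (j * x).val := by
      rw [hahat, Finset.sum_mul]
    rw [hrhs]
    refine (Fintype.sum_equiv (Equiv.addRight x) _ _ ?_).symm
    intro c
    have h1 : (Equiv.addRight x) c = c + x := rfl
    have h2 : x - (c + x) = -c := by ring
    rw [h1, h2, haneg]
    have h3 : j * (c + x) = j * c + j * x := by ring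
    rw [h3, echar_add hζ1, mul_assoc]
  -- membership of characters in U
  have hvU : ∀ j ∈ T, (fun x : ZMod (p ^ (m + 1)) => ζ ^ (j * x).val) ∈ U := by
    intro j hj
    have hjne : ahat j ≠ 0 := (Finset.mem_filter.mp hj).2
    have hwU : (fun x : ZMod (p ^ (m + 1)) =>
        ∑ y : ZMod (p ^ (m + 1)), (a (x - y) : ℂ) * ζ ^ (j * y).val) ∈ U := by
      have hrepr : (fun x : ZMod (p ^ (m + 1)) =>
          ∑ y : ZMod (p ^ (m + 1)), (a (x - y) : ℂ) * ζ ^ (j * y).val)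
          = ∑ q : Fin (m + 1) × ZMod p,
              (∑ y : ZMod (p ^ (m + 1)), (if φ y q.1 = q.2 then (1 : ℂ) else 0) * ζ ^ (j * y).val)
              • u q := by
        funext x
        rw [Finset.sum_apply]
        have hterm : ∀ q : Fin (m + 1) × ZMod p,
            ((∑ y : ZMod (p ^ (m + 1)), (if φ y q.1 = q.2 then (1 : ℂ) else 0) * ζ ^ (j * y).val)
              • u q) x
            = ∑ y : ZMod (p ^ (m + 1)),
                (if φ y q.1 = q.2 then (1 : ℂ) else 0) * (if φ x q.1 = q.2 then 1 else 0)
                  * ζ ^ (j * y).val := by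
          intro q
          rw [Pi.smul_apply, smul_eq_mul, Finset.sum_mul]
          apply Finset.sum_congr rfl
          intro y _
          simp only [hu]
          ring
        simp only [hterm]
        rw [Finset.sum_comm]
        apply Finset.sum_congr rfl
        intro y _
        rw [← Finset.sum_mul, hsum_q x y]
      rw [hrepr]
      exact Submodule.sum_mem _ (fun q _ => Submodule.smul_mem _ _ (hu_mem q))
    have hrepr2 : (fun x : ZMod (p ^ (m + 1)) => ζ ^ (j * x).val)
        = (ahat j)⁻¹ • (fun x : ZMod (p ^ (m + 1)) =>
            ∑ y : ZMod (p ^ (m + 1)), (a (x - y) : ℂ) * ζ ^ (j * y).val) := by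
      funext x
      rw [Pi.smul_apply, hconv j x, smul_eq_mul]
      field_simp
    rw [hrepr2]
    exact Submodule.smul_mem _ _ hwU
  -- linear independence of characters indexed by T
  have hli : LinearIndependent ℂ
      (fun j : {j // j ∈ T} => fun x : ZMod (p ^ (m + 1)) => ζ ^ ((j : ZMod (p ^ (m + 1))) * x).val) := by
    rw [Fintype.linearIndependent_iff]
    intro g hg k
    have h0 : ∀ x : ZMod (p ^ (m + 1)),
        ∑ j : {j // j ∈ T}, g j * ζ ^ ((j : ZMod (p ^ (m + 1))) * x).val = 0 := by
      intro x
      have := congrFun hg x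
      simpa [Finset.sum_apply] using this
    have h2 : ∀ j : {j // j ∈ T},
        ∑ x : ZMod (p ^ (m + 1)),
          g j * ζ ^ ((j : ZMod (p ^ (m + 1))) * x).val * ζ ^ ((-(k : ZMod (p ^ (m + 1)))) * x).val
        = g j * (if ((j : ZMod (p ^ (m + 1))) - k) = 0 then ((p ^ (m + 1) : ℕ) : ℂ) else 0) := by
      intro j
      rw [← echar_sum hζ (((j : ZMod (p ^ (m + 1))) - k)), Finset.mul_sum]
      apply Finset.sum_congr rfl
      intro x _
      rw [mul_assoc, ← echar_add hζ1]
      congr 2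
      ring
    have h1 : ∑ j : {j // j ∈ T}, g j *
        (if ((j : ZMod (p ^ (m + 1))) - k) = 0 then ((p ^ (m + 1) : ℕ) : ℂ) else 0) = 0 := by
      calc ∑ j : {j // j ∈ T}, g j *
            (if ((j : ZMod (p ^ (m + 1))) - k) = 0 then ((p ^ (m + 1) : ℕ) : ℂ) else 0)
          = ∑ j : {j // j ∈ T}, ∑ x : ZMod (p ^ (m + 1)),
              g j * ζ ^ ((j : ZMod (p ^ (m + 1))) * x).val
                * ζ ^ ((-(k : ZMod (p ^ (m + 1)))) * x).val := by
            exact Finset.sum_congr rfl (fun j _ => (h2 j).symm)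
        _ = ∑ x : ZMod (p ^ (m + 1)), ∑ j : {j // j ∈ T},
              g j * ζ ^ ((j : ZMod (p ^ (m + 1))) * x).val
                * ζ ^ ((-(k : ZMod (p ^ (m + 1)))) * x).val := Finset.sum_comm
        _ = ∑ x : ZMod (p ^ (m + 1)),
              (∑ j : {j // j ∈ T}, g j * ζ ^ ((j : ZMod (p ^ (m + 1))) * x).val)
                * ζ ^ ((-(k : ZMod (p ^ (m + 1)))) * x).val := by
            exact Finset.sum_congr rfl (fun x _ => (Finset.sum_mul _ _ _).symm)
        _ = 0 := by
            apply Finset.sum_eq_zero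
            intro x _
            rw [h0 x, zero_mul]
    have h3 : ∀ j : {j // j ∈ T},
        (((j : ZMod (p ^ (m + 1))) - k) = 0) ↔ j = k := by
      intro j
      rw [sub_eq_zero]
      exact ⟨fun h => Subtype.ext h, fun h => by rw [h]⟩
    simp only [h3, mul_ite, mul_zero] at h1
    rw [Finset.sum_ite_eq' Finset.univ k (fun j => g j * ((p ^ (m + 1) : ℕ) : ℂ))] at h1
    simp only [Finset.mem_univ, if_true] at h1
    rcases mul_eq_zero.mp h1 with h | h
    · exact h
    · exact absurd h (by exact_mod_cast hNpos.ne')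
  -- cardinality upper bound for T
  have hcard_upper : T.card ≤ 1 + (m + 1) * (p - 1) := by
    have hli2 : LinearIndependent ℂ (fun j : {j // j ∈ T} =>
        (⟨fun x => ζ ^ ((j : ZMod (p ^ (m + 1))) * x).val, hvU j j.2⟩ : U)) := by
      apply LinearIndependent.of_comp (U.subtype)
      exact hli
    have hcard1 : Fintype.card {j // j ∈ T} ≤ Module.finrank ℂ U :=
      hli2.fintype_card_le_finrank
    have hcard2 : Module.finrank ℂ U ≤ t.card := by
      have := finrank_span_finset_le_card (R := ℂ) t
      simpa [Set.finrank, hU] using this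
    have hcard3 : t.card ≤ 1 + (m + 1) * (p - 1) := by
      refine le_trans (Finset.card_insert_le _ _) ?_
      have himg := Finset.card_image_le
        (s := (univ : Finset (Fin (m + 1))) ×ˢ ((univ : Finset (ZMod p)).erase 0)) (f := u)
      have hprod : ((univ : Finset (Fin (m + 1))) ×ˢ ((univ : Finset (ZMod p)).erase 0)).card
          = (m + 1) * (p - 1) := by
        rw [Finset.card_product, Finset.card_univ, Fintype.card_fin,
          Finset.card_erase_of_mem (Finset.mem_univ _), Finset.card_univ, ZMod.card]
      omega
    have hcoe : Fintype.card {j // j ∈ T} = T.card := Fintype.card_coe T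
    omega
  -- the polynomial with the a-coefficients
  set P : Polynomial ℚ :=
    ∑ c : ZMod (p ^ (m + 1)), Polynomial.C ((a c : ℚ)) * Polynomial.X ^ (c.val) with hP
  have haeval : ∀ j : ZMod (p ^ (m + 1)), Polynomial.aeval (ζ ^ j.val) P = ahat j := by
    intro j
    rw [hP, map_sum, hahat]
    apply Finset.sum_congr rfl
    intro c _
    rw [map_mul, Polynomial.aeval_C, map_pow, Polynomial.aeval_X, ← pow_mul,
      map_natCast]
    congr 1
    rw [ZMod.val_mul, pow_mod_eq hζ1]
  -- the map onto the multiples of p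
  set gmap : ZMod (p ^ m) → ZMod (p ^ (m + 1)) :=
    fun k => ((p * k.val : ℕ) : ZMod (p ^ (m + 1))) with hgmap
  have hgval : ∀ k : ZMod (p ^ m), (gmap k).val = p * k.val := by
    intro k
    rw [hgmap]
    simp only []
    rw [ZMod.val_natCast]
    apply Nat.mod_eq_of_lt
    calc p * k.val < p * p ^ m := mul_lt_mul_of_pos_left (ZMod.val_lt k) hp.pos
      _ = p ^ (m + 1) := hNsplit.symm
  have hginj : Function.Injective gmap := by
    intro k₁ k₂ hk
    have h1 : (gmap k₁).val = (gmap k₂).val := by rw [hk]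
    rw [hgval, hgval] at h1
    exact ZMod.val_injective _ (Nat.eq_of_mul_eq_mul_left hp.pos h1)
  have himg : univ.filter (fun j : ZMod (p ^ (m + 1)) => p ∣ j.val)
      = univ.image gmap := by
    ext j
    simp only [Finset.mem_filter, Finset.mem_univ, true_and, Finset.mem_image]
    constructor
    · rintro ⟨w, hw⟩
      have hwlt : w < p ^ m := by
        have hjv := ZMod.val_lt j
        rw [hw, hNsplit] at hjv
        exact Nat.lt_of_mul_lt_mul_left hjv
      refine ⟨(w : ZMod (p ^ m)), ?_⟩
      have hval : ((w : ZMod (p ^ m))).val = w := ZMod.val_cast_of_lt hwlt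
      rw [hgmap]
      simp only []
      rw [hval, ← hw, ZMod.natCast_zmod_val]
    · rintro ⟨k, rfl⟩
      rw [hgval]
      exact Dvd.intro _ rfl
  have hη : IsPrimitiveRoot (ζ ^ p) (p ^ m) := hζ.pow hNpos hNsplit
  have hg_e : ∀ (k : ZMod (p ^ m)) (c : ZMod (p ^ (m + 1))),
      ζ ^ ((gmap k * c).val) = (ζ ^ p) ^ ((k * ((c.val : ℕ) : ZMod (p ^ m))).val) := by
    intro k c
    rw [← pow_mul]
    apply pow_congr hζ1
    have hA : (gmap k * c).val ≡ p * k.val * c.val [MOD p ^ (m + 1)] := by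
      rw [ZMod.val_mul, hgval]
      exact Nat.mod_modEq _ _
    have hB : p * ((k * ((c.val : ℕ) : ZMod (p ^ m))).val)
        ≡ p * (k.val * c.val) [MOD p ^ (m + 1)] := by
      have hB' : p * ((k * ((c.val : ℕ) : ZMod (p ^ m))).val)
          ≡ p * (k.val * c.val) [MOD p * p ^ m] := by
        apply Nat.ModEq.mul_left'
        rw [ZMod.val_mul, ZMod.val_natCast]
        calc (k.val * (c.val % p ^ m)) % p ^ m
            ≡ k.val * (c.val % p ^ m) [MOD p ^ m] := Nat.mod_modEq _ _
          _ ≡ k.val * c.val [MOD p ^ m] := Nat.ModEq.mul_left _ (Nat.mod_modEq _ _)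
      rwa [← hNsplit] at hB'
    rw [← mul_assoc] at hB
    exact hA.trans hB.symm
  have hgsum : ∀ c : ZMod (p ^ (m + 1)),
      ∑ k : ZMod (p ^ m), ζ ^ ((gmap k * c).val)
      = if ((c.val : ℕ) : ZMod (p ^ m)) = 0 then ((p ^ m : ℕ) : ℂ) else 0 := by
    intro c
    rw [← echar_sum hη (((c.val : ℕ) : ZMod (p ^ m)))]
    · exact Finset.sum_congr rfl (fun k _ => hg_e k c)
  set K : Finset (ZMod (p ^ (m + 1))) :=
    univ.filter (fun c => ((c.val : ℕ) : ZMod (p ^ m)) = 0) with hK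
  have hsum_nonunit : ∑ j ∈ univ.filter (fun j : ZMod (p ^ (m + 1)) => p ∣ j.val), ahat j
      = ((p ^ m : ℕ) : ℂ) * ∑ c ∈ K, (a c : ℂ) := by
    rw [himg, Finset.sum_image (fun x _ y _ h => hginj h), hahat]
    simp only []
    rw [Finset.sum_comm]
    have hstep : ∀ c : ZMod (p ^ (m + 1)),
        ∑ k : ZMod (p ^ m), (a c : ℂ) * ζ ^ ((gmap k * c).val)
        = (a c : ℂ) * (if ((c.val : ℕ) : ZMod (p ^ m)) = 0 then ((p ^ m : ℕ) : ℂ) else 0) := by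
      intro c
      rw [← Finset.mul_sum, hgsum c]
    simp only [hstep, mul_ite, mul_zero]
    rw [← Finset.sum_filter, ← hK, Finset.mul_sum]
    exact Finset.sum_congr rfl (fun c _ => mul_comm _ _)
  have hsum_all : ∑ j : ZMod (p ^ (m + 1)), ahat j
      = ((p ^ (m + 1) : ℕ) : ℂ) * ((a 0 : ℕ) : ℂ) := by
    rw [hahat]
    simp only []
    rw [Finset.sum_comm]
    have hstep : ∀ c : ZMod (p ^ (m + 1)),
        ∑ j : ZMod (p ^ (m + 1)), (a c : ℂ) * ζ ^ ((j * c).val)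
        = (a c : ℂ) * (if c = 0 then ((p ^ (m + 1) : ℕ) : ℂ) else 0) := by
      intro c
      rw [← Finset.mul_sum, echar_sum hζ]
    simp only [hstep, mul_ite, mul_zero]
    rw [Finset.sum_ite_eq' Finset.univ (0 : ZMod (p ^ (m + 1)))
      (fun c => (a c : ℂ) * ((p ^ (m + 1) : ℕ) : ℂ))]
    simp [mul_comm]
  have h0K : (0 : ZMod (p ^ (m + 1))) ∈ K := by
    simp [hK, ZMod.val_zero]
  have hKcard : K.card ≤ p := by
    have hinj : Set.InjOn (fun c : ZMod (p ^ (m + 1)) => ((c.val / p ^ m : ℕ) : ZMod p)) K := by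
      intro c₁ h₁ c₂ h₂ hf
      have hd₁ : p ^ m ∣ c₁.val := by
        have := (Finset.mem_filter.mp h₁).2
        rwa [ZMod.natCast_eq_zero_iff] at this
      have hd₂ : p ^ m ∣ c₂.val := by
        have := (Finset.mem_filter.mp h₂).2
        rwa [ZMod.natCast_eq_zero_iff] at this
      have hq₁ : c₁.val / p ^ m < p := by
        apply Nat.div_lt_of_lt_mul
        calc c₁.val < p ^ (m + 1) := ZMod.val_lt c₁
          _ = p ^ m * p := by rw [hNsplit, mul_comm]
      have hq₂ : c₂.val / p ^ m < p := by
        apply Nat.div_lt_of_lt_mul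
        calc c₂.val < p ^ (m + 1) := ZMod.val_lt c₂
          _ = p ^ m * p := by rw [hNsplit, mul_comm]
      have hq : c₁.val / p ^ m = c₂.val / p ^ m := by
        have := congrArg ZMod.val hf
        rwa [ZMod.val_cast_of_lt hq₁, ZMod.val_cast_of_lt hq₂] at this
      have hv : c₁.val = c₂.val := by
        rw [← Nat.div_mul_cancel hd₁, ← Nat.div_mul_cancel hd₂, hq]
      exact ZMod.val_injective _ hv
    calc K.card ≤ (univ : Finset (ZMod p)).card :=
        Finset.card_le_card_of_injOn _ (fun _ _ => Finset.mem_univ _) hinj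
      _ = p := by rw [Finset.card_univ, ZMod.card]
  have hSK : ∑ c ∈ K, a c ≤ (m + 1) + (p - 1) * m := by
    rw [← Finset.add_sum_erase K a h0K]
    have h1 : ∑ c ∈ K.erase 0, a c ≤ (K.erase 0).card * m := by
      have := Finset.sum_le_card_nsmul (K.erase 0) a m
        (fun c hc => hale c (Finset.mem_erase.mp hc).1)
      simpa using this
    have h2 : (K.erase 0).card ≤ p - 1 := by
      rw [Finset.card_erase_of_mem h0K]
      omega
    have h3 : (K.erase 0).card * m ≤ (p - 1) * m := Nat.mul_le_mul_right m h2
    omega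
  have hTu : ∑ j ∈ univ.filter (fun j : ZMod (p ^ (m + 1)) => ¬ p ∣ j.val), ahat j ≠ 0 := by
    have hsplit := Finset.sum_filter_add_sum_filter_not univ
      (fun j : ZMod (p ^ (m + 1)) => p ∣ j.val) ahat
    have hval : ∑ j ∈ univ.filter (fun j : ZMod (p ^ (m + 1)) => ¬ p ∣ j.val), ahat j
        = ((p ^ (m + 1) * a 0 : ℕ) : ℂ) - ((p ^ m * ∑ c ∈ K, a c : ℕ) : ℂ) := by
      have h1 : ∑ j ∈ univ.filter (fun j : ZMod (p ^ (m + 1)) => ¬ p ∣ j.val), ahat j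
          = ∑ j : ZMod (p ^ (m + 1)), ahat j
            - ∑ j ∈ univ.filter (fun j : ZMod (p ^ (m + 1)) => p ∣ j.val), ahat j := by
        rw [← hsplit]
        ring
      rw [h1, hsum_all, hsum_nonunit]
      push_cast
      ring
    rw [hval]
    have hlt : p ^ m * ∑ c ∈ K, a c < p ^ (m + 1) * a 0 := by
      rw [ha0]
      calc p ^ m * ∑ c ∈ K, a c ≤ p ^ m * ((m + 1) + (p - 1) * m) :=
          Nat.mul_le_mul_left _ hSK
        _ < p ^ m * (p * (m + 1)) := by
            apply mul_lt_mul_of_pos_left ?_ (pow_pos hp.pos m)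
            have hexp : (p - 1) * m + m = p * m := by
              have hpp : p - 1 + 1 = p := Nat.succ_pred_eq_of_pos hp.pos
              calc (p - 1) * m + m = ((p - 1) + 1) * m := by ring
                _ = p * m := by rw [hpp]
            have hpm : p * (m + 1) = p * m + p := by ring
            omega
        _ = p ^ (m + 1) * (m + 1) := by ring
    intro hzero
    rw [sub_eq_zero] at hzero
    have : (p ^ (m + 1) * a 0 : ℕ) = (p ^ m * ∑ c ∈ K, a c : ℕ) := by
      exact_mod_cast hzero
    omega
  obtain ⟨j₀, hj₀mem, hj₀⟩ := Finset.exists_ne_zero_of_sum_ne_zero hTu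
  have hj₀div : ¬ p ∣ j₀.val := by
    have := Finset.mem_filter.mp hj₀mem
    exact this.2
  have hprim : ∀ j : ZMod (p ^ (m + 1)), ¬ p ∣ j.val →
      IsPrimitiveRoot (ζ ^ j.val) (p ^ (m + 1)) := by
    intro j hj
    exact hζ.pow_of_coprime _
      (((Nat.Prime.coprime_iff_not_dvd hp).mpr hj).symm.pow_right _)
  have hTunits : ∀ j ∈ univ.filter (fun j : ZMod (p ^ (m + 1)) => ¬ p ∣ j.val),
      ahat j ≠ 0 := by
    intro j hjmem hzero
    have hjdiv : ¬ p ∣ j.val := (Finset.mem_filter.mp hjmem).2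
    have hz1 : Polynomial.aeval (ζ ^ j.val) P = 0 := by rw [haeval]; exact hzero
    have hmin1 : minpoly ℚ (ζ ^ j.val) = Polynomial.cyclotomic (p ^ (m + 1)) ℚ :=
      (Polynomial.cyclotomic_eq_minpoly_rat (hprim j hjdiv) hNpos).symm
    have hmin2 : minpoly ℚ (ζ ^ j₀.val) = Polynomial.cyclotomic (p ^ (m + 1)) ℚ :=
      (Polynomial.cyclotomic_eq_minpoly_rat (hprim j₀ hj₀div) hNpos).symm
    have hdvd : minpoly ℚ (ζ ^ j.val) ∣ P := minpoly.dvd ℚ _ hz1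
    rw [hmin1, ← hmin2] at hdvd
    obtain ⟨Q, hQ⟩ := hdvd
    have hz2 : Polynomial.aeval (ζ ^ j₀.val) P = 0 := by
      rw [hQ, map_mul, minpoly.aeval, zero_mul]
    rw [haeval] at hz2
    exact hj₀ hz2
  have h0T : (0 : ZMod (p ^ (m + 1))) ∈ T := by
    rw [hT, Finset.mem_filter]
    refine ⟨Finset.mem_univ _, ?_⟩
    rw [hahat]
    simp only [zero_mul, ZMod.val_zero, pow_zero, mul_one]
    have hc : (∑ c : ZMod (p ^ (m + 1)), (a c : ℂ))
        = ((∑ c : ZMod (p ^ (m + 1)), a c : ℕ) : ℂ) := by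
      push_cast
      rfl
    rw [hc, Nat.cast_ne_zero]
    have := Finset.single_le_sum (f := a) (fun c _ => Nat.zero_le _)
      (Finset.mem_univ (0 : ZMod (p ^ (m + 1))))
    omega
  have hsub : insert (0 : ZMod (p ^ (m + 1)))
      (univ.filter (fun j : ZMod (p ^ (m + 1)) => ¬ p ∣ j.val)) ⊆ T := by
    intro j hj
    rcases Finset.mem_insert.mp hj with h | h
    · exact h ▸ h0T
    · rw [hT, Finset.mem_filter]
      exact ⟨Finset.mem_univ _, hTunits j h⟩
  have hdivcard : (univ.filter (fun j : ZMod (p ^ (m + 1)) => p ∣ j.val)).card = p ^ m := by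
    rw [himg, Finset.card_image_of_injective _ hginj, Finset.card_univ, ZMod.card]
  have hnotdivcard : (univ.filter (fun j : ZMod (p ^ (m + 1)) => ¬ p ∣ j.val)).card
      = p ^ (m + 1) - p ^ m := by
    have := Finset.card_filter_add_card_filter_not
      (s := (univ : Finset (ZMod (p ^ (m + 1))))) (p := fun j => p ∣ j.val)
    rw [Finset.card_univ, ZMod.card] at this
    omega
  have h0notmem : (0 : ZMod (p ^ (m + 1))) ∉
      univ.filter (fun j : ZMod (p ^ (m + 1)) => ¬ p ∣ j.val) := by
    simp [ZMod.val_zero]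
  have hlow : p ^ (m + 1) - p ^ m + 1 ≤ T.card := by
    have := Finset.card_le_card hsub
    rw [Finset.card_insert_of_notMem h0notmem, hnotdivcard] at this
    omega
  have h1eq : p ^ m * (p - 1) + p ^ m = p ^ (m + 1) := by
    have : p ^ m * (p - 1) + p ^ m * 1 = p ^ m * p := by
      rw [← Nat.mul_add]
      congr 1
      omega
    rw [mul_one] at this
    rw [this, hNsplit, mul_comm]
  have hbig : p ^ m * (p - 1) ≤ (m + 1) * (p - 1) := by
    omega
  have hfin : p ^ m ≤ m + 1 := Nat.le_of_mul_le_mul_right hbig (by omega)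
  omega
end

section
/- Let n ≥ 3. Then every permutation σ of the set Fin n → ZMod 2 that preserves the Hamming distance (i.e. hammingDist(σ x, σ y) = hammingDist(x, y) for all x, y : Fin n → ZMod 2) has order strictly less than 2^n. -/
/-!
An isometry `g` of the Hamming cube `(ZMod 2)^ι` with `g 0 = 0` preserves weights, so it sends
each unit vector `e i` to some unit vector `e (p i)`; since `x i = 1` exactly when `x` is closer to
`e i` than to `0`, this forces `g x (p i) = x i`, i.e. `g` permutes coordinates. Hence every isometry
has the form `σ x = x ∘ q + c`, and `σ ^ orderOf q` is a translation, whose square is the identity in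
characteristic two: `orderOf σ ∣ 2 * orderOf q`. Finally, for `n ≥ 3` points, the order of a
permutation is the lcm of its cycle lengths `aᵢ ≥ 2`; with at least two cycles it is at most
`∏ aᵢ ≤ 2 ^ ∑ (aᵢ - 1) ≤ 2 ^ (n - 2)`, and a single cycle has length `≤ n < 2 ^ (n - 1)`.
-/

open Finset

lemma Nat.mul_two_le_two_pow {a : ℕ} (ha : 1 ≤ a) : a * 2 ≤ 2 ^ a := by
  obtain ⟨b, rfl⟩ := Nat.exists_eq_add_of_le' ha
  have := b.lt_two_pow_self
  rw [pow_succ]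
  omega

lemma Multiset.prod_mul_two_pow_card_le (M : Multiset ℕ) (hM : ∀ a ∈ M, 1 ≤ a) :
    M.prod * 2 ^ Multiset.card M ≤ 2 ^ M.sum := by
  induction M using Multiset.induction with
  | empty => simp
  | cons a M ih =>
    have ha := Nat.mul_two_le_two_pow (hM a (Multiset.mem_cons_self a M))
    have hM' := ih fun b hb => hM b (Multiset.mem_cons_of_mem hb)
    calc (a ::ₘ M).prod * 2 ^ Multiset.card (a ::ₘ M)
        = (a * 2) * (M.prod * 2 ^ Multiset.card M) := by
          rw [Multiset.prod_cons, Multiset.card_cons, pow_succ]; ring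
      _ ≤ 2 ^ a * 2 ^ M.sum := Nat.mul_le_mul ha hM'
      _ = 2 ^ (a ::ₘ M).sum := by rw [Multiset.sum_cons, pow_add]

theorem Equiv.Perm.orderOf_lt_two_pow_pred {α : Type*} [Fintype α] [DecidableEq α]
    (hα : 3 ≤ Fintype.card α) (p : Equiv.Perm α) :
    orderOf p < 2 ^ (Fintype.card α - 1) := by
  set n := Fintype.card α
  have hn : n < 2 ^ (n - 1) := by
    have := Nat.mul_two_le_two_pow (a := n - 1) (by omega)
    omega
  have hsum : p.cycleType.sum ≤ n := p.sum_cycleType_le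
  rw [← p.lcm_cycleType]
  rcases Nat.lt_or_ge (Multiset.card p.cycleType) 2 with hcard | hcard
  · obtain h0 | h1 : Multiset.card p.cycleType = 0 ∨ Multiset.card p.cycleType = 1 := by omega
    · rw [Multiset.card_eq_zero.mp h0, Multiset.lcm_zero]
      omega
    · obtain ⟨a, ha⟩ := Multiset.card_eq_one.mp h1
      rw [ha, Multiset.sum_singleton] at hsum
      rw [ha, Multiset.lcm_singleton, normalize_eq]
      omega
  · have hpos : ∀ a ∈ p.cycleType, 1 ≤ a :=
      fun a ha => (two_le_of_mem_cycleType ha).trans' one_le_two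
    have hlcm : p.cycleType.lcm ≤ p.cycleType.prod :=
      Nat.le_of_dvd (Multiset.prod_pos hpos) (Multiset.lcm_dvd.mpr fun a ha => Multiset.dvd_prod ha)
    have hbound : p.cycleType.lcm * 2 ^ 2 ≤ 2 ^ (n - 1) * 2 :=
      calc p.cycleType.lcm * 2 ^ 2
          ≤ p.cycleType.prod * 2 ^ Multiset.card p.cycleType :=
            Nat.mul_le_mul hlcm (Nat.pow_le_pow_right two_pos hcard)
        _ ≤ 2 ^ p.cycleType.sum := p.cycleType.prod_mul_two_pow_card_le hpos
        _ ≤ 2 ^ (n - 1 + 1) := Nat.pow_le_pow_right two_pos (by omega)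
        _ = 2 ^ (n - 1) * 2 := pow_succ _ _
    have := Nat.two_pow_pos (n - 1)
    omega

section Hamming

variable {ι : Type*} [Fintype ι] [DecidableEq ι]

theorem hammingDist_single_lt_hammingNorm_iff {β : Type*} [DecidableEq β] [Zero β]
    (y : ι → β) (j : ι) {v : β} (hv : v ≠ 0) :
    hammingDist y (Pi.single j v) < hammingNorm y ↔ y j = v := by
  simp only [hammingDist, hammingNorm, card_filter]
  rw [← add_sum_erase _ _ (mem_univ j), ← add_sum_erase _ _ (mem_univ j)]
  have hrest : ∑ i ∈ univ.erase j, (if y i ≠ (Pi.single j v : ι → β) i then 1 else 0)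
      = ∑ i ∈ univ.erase j, (if y i ≠ 0 then 1 else 0) :=
    sum_congr rfl fun i hi => by rw [Pi.single_eq_of_ne (ne_of_mem_erase hi)]
  rw [hrest, Pi.single_eq_same, add_lt_add_iff_right]
  by_cases h : y j = v
  · simp [h, hv]
  · simp only [h]; split_ifs <;> simp

theorem hammingNorm_single {β : Type*} [DecidableEq β] [Zero β] (j : ι) {v : β} (hv : v ≠ 0) :
    hammingNorm (Pi.single j v : ι → β) = 1 := by
  rw [hammingNorm, card_eq_one]
  exact ⟨j, by ext i; by_cases h : i = j <;> simp [h, hv]⟩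

theorem exists_eq_single_of_hammingNorm_eq_one {y : ι → ZMod 2} (h : hammingNorm y = 1) :
    ∃ j, y = Pi.single j 1 := by
  obtain ⟨j, hj⟩ := card_eq_one.mp h
  refine ⟨j, funext fun i => ?_⟩
  have hi := congrArg (i ∈ ·) hj
  by_cases hij : i = j
  · subst hij
    simpa using (by decide : ∀ a : ZMod 2, a ≠ 0 → a = 1) _ (by simpa using hi)
  · simpa [hij] using hi

theorem exists_perm_eq_comp_of_hammingDist_eq {g : (ι → ZMod 2) → ι → ZMod 2}
    (hg : ∀ x y, hammingDist (g x) (g y) = hammingDist x y) (hg0 : g 0 = 0) :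
    ∃ q : Equiv.Perm ι, ∀ x, g x = x ∘ q := by
  have hnorm : ∀ x, hammingNorm (g x) = hammingNorm x := fun x => by
    rw [← hammingDist_zero_right, ← hg0, hg, hammingDist_zero_right]
  choose p hp using fun i : ι => exists_eq_single_of_hammingNorm_eq_one
    ((hnorm (Pi.single i 1)).trans (hammingNorm_single i one_ne_zero))
  have hcoord : ∀ x i, g x (p i) = x i := fun x i => by
    refine (by decide : ∀ a b : ZMod 2, (a = 1 ↔ b = 1) → a = b) _ _ ?_
    rw [← hammingDist_single_lt_hammingNorm_iff _ _ one_ne_zero,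
      ← hammingDist_single_lt_hammingNorm_iff _ _ one_ne_zero, ← hp, hg, hnorm]
  have hinj : Function.Injective p := fun a b hab => by
    have h := hcoord (Pi.single a 1) b
    rw [← hab, hcoord, Pi.single_apply] at h
    by_contra hne
    simp [Ne.symm hne] at h
  let e := Equiv.ofBijective p (Finite.injective_iff_bijective.mp hinj)
  refine ⟨e.symm, fun x => funext fun j => ?_⟩
  rw [Function.comp_apply, ← hcoord x (e.symm j)]
  exact congrArg (g x) (e.apply_symm_apply j).symm

theorem exists_perm_eq_comp_add_of_hammingDist_eq (σ : Equiv.Perm (ι → ZMod 2))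
    (hσ : ∀ x y, hammingDist (σ x) (σ y) = hammingDist x y) :
    ∃ q : Equiv.Perm ι, ∀ x, σ x = x ∘ q + σ 0 := by
  obtain ⟨q, hq⟩ := exists_perm_eq_comp_of_hammingDist_eq (g := fun x => σ x - σ 0)
    (fun x y => by
      rw [hammingDist_eq_hammingNorm, neg_sub, sub_add_sub_cancel', ← neg_add_eq_sub,
        ← hammingDist_eq_hammingNorm, hσ])
    (sub_self _)
  exact ⟨q, fun x => by rw [← hq, sub_add_cancel]⟩

end Hamming

theorem exists_pow_apply_eq_comp_add {ι M : Type*} [AddMonoid M] {σ : Equiv.Perm (ι → M)}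
    {q : Equiv.Perm ι} {c : ι → M} (h : ∀ x, σ x = x ∘ q + c) (k : ℕ) :
    ∃ d, ∀ x, (σ ^ k) x = x ∘ ⇑(q ^ k) + d := by
  induction k with
  | zero => exact ⟨0, fun x => by simp⟩
  | succ k ih =>
    obtain ⟨d, hd⟩ := ih
    refine ⟨d ∘ q + c, fun x => ?_⟩
    rw [pow_succ', Equiv.Perm.mul_apply, hd, h, pow_succ, Equiv.Perm.coe_mul, Pi.add_comp, add_assoc]
    rfl

theorem orderOf_dvd_two_mul_orderOf_of_apply_eq {ι R : Type*} [Semiring R] [CharP R 2]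
    {σ : Equiv.Perm (ι → R)} {q : Equiv.Perm ι} {c : ι → R} (h : ∀ x, σ x = x ∘ q + c) :
    orderOf σ ∣ 2 * orderOf q := by
  obtain ⟨d, hd⟩ := exists_pow_apply_eq_comp_add h (orderOf q)
  refine orderOf_dvd_of_pow_eq_one (Equiv.ext fun x => funext fun i => ?_)
  rw [mul_comm, pow_mul, sq, Equiv.Perm.mul_apply, hd, hd, pow_orderOf_eq_one]
  simp [add_assoc, CharTwo.add_self_eq_zero]

/-- For `n ≥ 3`, every permutation of `(ZMod 2)^n` preserving the
Hamming distance has order strictly less than `2^n`. -/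
theorem stmt_4 (n : ℕ) (hn : 3 ≤ n) (σ : Equiv.Perm (Fin n → ZMod 2))
    (hσ : ∀ x y : Fin n → ZMod 2, hammingDist (σ x) (σ y) = hammingDist x y) :
    orderOf σ < 2 ^ n := by
  obtain ⟨q, hq⟩ := exists_perm_eq_comp_add_of_hammingDist_eq σ hσ
  have hq_lt : orderOf q < 2 ^ (n - 1) := by
    simpa using q.orderOf_lt_two_pow_pred (by simpa using hn)
  calc orderOf σ ≤ 2 * orderOf q :=
        Nat.le_of_dvd (Nat.mul_pos two_pos (orderOf_pos q)) (orderOf_dvd_two_mul_orderOf_of_apply_eq hq)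
    _ < 2 * 2 ^ (n - 1) := by omega
    _ = 2 ^ n := by rw [← pow_succ']; congr 1; omega
end

section
/- Given positive integers n ∣ m with n < m, an element h ∈ ZMod m of additive order m/n, an n-cycle ρ ∈ Perm(Fin n) (a cycle whose support is all of Fin n), and i ∈ Fin n, define Ψ : ℕ → (Fin n → ZMod m) by Ψ(t)(j) = c·h where c = |{k ∈ {0,…,t−1} : ρ^k(i) = j}|. Then Ψ is injective on {0, 1, …, m−1}: if 0 ≤ s, t < m and Ψ(s) = Ψ(t), then s = t. -/
/-- The minimal period of `i` under a transitively-acting permutation of `Fin n` is `n`. -/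
lemma aux_minimalPeriod_eq (n : ℕ) (hn : 0 < n) (ρ : Equiv.Perm (Fin n))
    (hρ : ∀ x y : Fin n, ∃ k : ℕ, (ρ ^ k) x = y) (i : Fin n) :
    Function.minimalPeriod (⇑ρ) i = n := by
  have hiter : ∀ k : ℕ, (⇑ρ)^[k] i = (ρ ^ k) i := fun k => by
    rw [Equiv.Perm.iterate_eq_pow]
  have hNpos : 0 < orderOf ρ := orderOf_pos ρ
  have hper : Function.IsPeriodicPt (⇑ρ) (orderOf ρ) i := by
    show (⇑ρ)^[orderOf ρ] i = i
    rw [hiter, pow_orderOf_eq_one]; rfl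
  set p := Function.minimalPeriod (⇑ρ) i with hp
  have hppos : 0 < p := hper.minimalPeriod_pos hNpos
  -- p ≤ n by injectivity on Iio p
  have hple : p ≤ n := by
    have := Finset.card_le_card_of_injOn (fun k => (⇑ρ)^[k] i)
      (s := Finset.range p) (t := Finset.univ) (fun a _ => Finset.mem_univ _)
      (fun a ha b hb hab => by
        apply Function.iterate_injOn_Iio_minimalPeriod (f := ⇑ρ) (x := i) ?_ ?_ hab
        · simpa using (Finset.mem_coe.mp ha)
        · simpa using (Finset.mem_coe.mp hb))
    simpa using this
  -- n ≤ p by surjectivity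
  have hnle : n ≤ p := by
    have hsurj : Set.SurjOn (fun k => (⇑ρ)^[k] i) (Finset.range p : Set ℕ)
        (Finset.univ : Finset (Fin n)) := by
      intro y _
      obtain ⟨k, hk⟩ := hρ i y
      refine ⟨k % p, ?_, ?_⟩
      · simpa using Nat.mod_lt k hppos
      · show (⇑ρ)^[k % p] i = y
        rw [Function.iterate_mod_minimalPeriod_eq, hiter, hk]
    have := Finset.card_le_card_of_surjOn (fun k => (⇑ρ)^[k] i) hsurj
    simpa using this
  omega

/-- Counting formula: `#{k < t : k % n = r} = (t + (n - 1 - r)) / n` for `r < n`. -/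
lemma aux_count (n : ℕ) (hn : 0 < n) (r : ℕ) (hr : r < n) (t : ℕ) :
    ((Finset.range t).filter fun k => k % n = r).card = (t + (n - 1 - r)) / n := by
  induction t with
  | zero => simp [Nat.div_eq_of_lt (by omega : n - 1 - r < n)]
  | succ t ih =>
    rw [Finset.range_add_one, Finset.filter_insert]
    have hdvd_iff : n ∣ t + (n - 1 - r) + 1 ↔ t % n = r := by
      have h1 : t % n < n := Nat.mod_lt _ hn
      have e : t + (n - 1 - r) + 1 = n * (t / n) + (t % n + (n - r)) := by
        have := Nat.div_add_mod t n; omega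
      rw [e, Nat.dvd_add_right (Dvd.intro _ rfl)]
      constructor
      · rintro ⟨q', hq'⟩
        have hq1 : q' = 1 := by
          rcases Nat.lt_or_ge q' 1 with hl | hl
          · interval_cases q' <;> omega
          rcases Nat.lt_or_ge q' 2 with h2 | h2
          · omega
          · exfalso
            have : n * 2 ≤ n * q' := Nat.mul_le_mul_left n h2
            omega
        subst hq1; omega
      · intro hmod
        exact ⟨1, by omega⟩
    rw [show t + 1 + (n - 1 - r) = t + (n - 1 - r) + 1 from by omega]
    by_cases hc : t % n = r
    · rw [if_pos hc, Finset.card_insert_of_notMem (by simp), ih]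
      have : (t + (n - 1 - r) + 1) / n = (t + (n - 1 - r)) / n + 1 :=
        Nat.succ_div_of_dvd (hdvd_iff.mpr hc)
      omega
    · rw [if_neg hc, ih]
      have : (t + (n - 1 - r) + 1) / n = (t + (n - 1 - r)) / n :=
        Nat.succ_div_of_not_dvd (fun hd => hc (hdvd_iff.mp hd))
      omega

lemma aux_key (m n : ℕ) (hn : 0 < n) (hdvd : n ∣ m) (hlt : n < m)
    (h : ZMod m) (hord : addOrderOf h = m / n)
    (ρ : Equiv.Perm (Fin n))
    (hρ : ∀ x y : Fin n, ∃ k : ℕ, (ρ ^ k) x = y)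
    (i : Fin n)
    (s t : ℕ) (hst : s ≤ t) (ht : t < m)
    (heq : ∀ j, (((Finset.range s).filter fun k => (ρ ^ k) i = j).card • h : ZMod m)
      = ((Finset.range t).filter fun k => (ρ ^ k) i = j).card • h) :
    s = t := by
  set q := m / n with hq
  have hm : m = n * q := (Nat.div_mul_cancel hdvd).symm.trans (mul_comm _ _)
  have hq2 : 2 ≤ q := by nlinarith
  -- minimal period is n
  have hper := aux_minimalPeriod_eq n hn ρ hρ i
  -- residue characterization
  have hres : ∀ j : Fin n, ∃ r : ℕ, r < n ∧ ∀ k : ℕ, ((ρ ^ k) i = j ↔ k % n = r) := by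
    intro j
    obtain ⟨k0, hk0⟩ := hρ i j
    refine ⟨k0 % n, Nat.mod_lt k0 hn, fun k => ?_⟩
    have hiter : ∀ a : ℕ, (ρ ^ a) i = (⇑ρ)^[a] i := fun a => by
      rw [Equiv.Perm.iterate_eq_pow]
    have hmod : ∀ a : ℕ, (ρ ^ a) i = (ρ ^ (a % n)) i := by
      intro a
      rw [hiter, hiter, ← Function.iterate_mod_minimalPeriod_eq (f := ⇑ρ) (x := i) (n := a), hper]
    constructor
    · intro hk
      have : (ρ ^ (k % n)) i = (ρ ^ (k0 % n)) i := by
        rw [← hmod, ← hmod, hk, hk0]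
      rw [hiter, hiter] at this
      exact Function.iterate_injOn_Iio_minimalPeriod (f := ⇑ρ) (x := i)
        (by simp [hper]; exact Nat.mod_lt k hn) (by simp [hper]; exact Nat.mod_lt k0 hn) this
    · intro hk
      rw [hmod, hk, ← hmod, hk0]
  choose r hrlt hrchar using hres
  -- counts
  set c : ℕ → Fin n → ℕ := fun a j => ((Finset.range a).filter fun k => (ρ ^ k) i = j).card
    with hc
  have hcount : ∀ (a : ℕ) (j : Fin n), c a j = (a + (n - 1 - r j)) / n := by
    intro a j
    have : ((Finset.range a).filter fun k => (ρ ^ k) i = j)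
        = ((Finset.range a).filter fun k => k % n = r j) := by
      apply Finset.filter_congr
      intro k _
      simpa using hrchar j k
    rw [hc]
    simp only [this]
    exact aux_count n hn (r j) (hrlt j) a
  -- sums of counts
  have hsum : ∀ a : ℕ, ∑ j : Fin n, c a j = a := by
    intro a
    have := Finset.card_eq_sum_card_fiberwise
      (f := fun k => (ρ ^ k) i) (s := Finset.range a) (t := Finset.univ)
      (fun x _ => Finset.mem_univ _)
    simpa [hc] using this.symm
  -- monotonicity and difference divisibility
  have hmono : ∀ j, c s j ≤ c t j := by
    intro j
    apply Finset.card_le_card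
    apply Finset.filter_subset_filter
    exact Finset.range_subset_range.mpr hst
  have hdvd' : ∀ j, q ∣ (c t j - c s j) := by
    intro j
    have h1 : (c s j + (c t j - c s j)) • h = c s j • h + (c t j - c s j) • h := add_nsmul h _ _
    have h2 : c s j + (c t j - c s j) = c t j := by have := hmono j; omega
    have h3 : (c t j - c s j) • h = 0 := by
      have h5 : c s j • h = c t j • h := heq j
      have h4 : c t j • h = c s j • h + (c t j - c s j) • h := by rw [← h1, h2]
      rw [← h5] at h4
      exact left_eq_add.mp h4
    rw [← hord]
    exact addOrderOf_dvd_iff_nsmul_eq_zero.mpr h3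
  -- bounds on differences
  have hbound : ∀ j, c s j + (t - s) / n ≤ c t j ∧ c t j ≤ c s j + (t - s) / n + 1 := by
    intro j
    rw [hcount t j, hcount s j]
    have hts : t + (n - 1 - r j) = (s + (n - 1 - r j)) + (t - s) := by omega
    rw [hts, Nat.add_div (a := s + (n - 1 - r j)) (b := t - s) hn]
    refine ⟨?_, ?_⟩ <;> (split <;> omega)
  -- sum of differences
  have hsumd : ∑ j : Fin n, (c t j - c s j) = t - s := by
    have : ∑ j : Fin n, (c s j + (c t j - c s j)) = ∑ j : Fin n, c t j := by
      apply Finset.sum_congr rfl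
      intro j _
      have := hmono j; omega
    rw [Finset.sum_add_distrib, hsum s, hsum t] at this
    omega
  by_contra hne
  have hslt : s < t := lt_of_le_of_ne hst hne
  -- some difference is positive
  have hex : ∃ j : Fin n, 0 < c t j - c s j := by
    by_contra hall
    push_neg at hall
    have : ∑ j : Fin n, (c t j - c s j) = 0 := Finset.sum_eq_zero (fun j _ => by have := hall j; omega)
    omega
  obtain ⟨j0, hj0⟩ := hex
  have hj0q : q ≤ c t j0 - c s j0 := Nat.le_of_dvd hj0 (hdvd' j0)
  have hdivpos : 1 ≤ (t - s) / n := by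
    have h4 := (hbound j0).2
    have h5 := hmono j0
    omega
  have hall : ∀ j : Fin n, q ≤ c t j - c s j := by
    intro j
    have hb := (hbound j).1
    have hpos : 0 < c t j - c s j := by omega
    exact Nat.le_of_dvd hpos (hdvd' j)
  have : n * q ≤ ∑ j : Fin n, (c t j - c s j) := by
    calc n * q = ∑ _j : Fin n, q := by simp [Finset.sum_const, mul_comm]
    _ ≤ ∑ j : Fin n, (c t j - c s j) := Finset.sum_le_sum (fun j _ => hall j)
  omega

/-- For `n ∣ m`, `n < m`, `h ∈ ZMod m` of additive order `m/n`,
`ρ` an `n`-cycle of `Fin n` (i.e. acting transitively by its powers) and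
`i : Fin n`, the map `Ψ(t)(j) = |{k < t : ρ^k i = j}| • h` is injective on
`{0, …, m-1}`. -/
theorem stmt_5 (m n : ℕ) (hn : 0 < n) (hdvd : n ∣ m) (hlt : n < m)
    (h : ZMod m) (hord : addOrderOf h = m / n)
    (ρ : Equiv.Perm (Fin n))
    (hρ : ∀ x y : Fin n, ∃ k : ℕ, (ρ ^ k) x = y)
    (i : Fin n)
    (Ψ : ℕ → Fin n → ZMod m)
    (hΨ : ∀ t j, Ψ t j = ((Finset.range t).filter fun k => (ρ ^ k) i = j).card • h)
    (s t : ℕ) (hs : s < m) (ht : t < m) (heq : Ψ s = Ψ t) :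
    s = t := by
  have heq' : ∀ j, (((Finset.range s).filter fun k => (ρ ^ k) i = j).card • h : ZMod m)
      = ((Finset.range t).filter fun k => (ρ ^ k) i = j).card • h := by
    intro j
    rw [← hΨ s j, ← hΨ t j, heq]
  rcases le_total s t with hst | hst
  · exact aux_key m n hn hdvd hlt h hord ρ hρ i s t hst ht heq'
  · exact (aux_key m n hn hdvd hlt h hord ρ hρ i t s hst hs (fun j => (heq' j).symm)).symm
end

section
/- Given positive integers n ∣ m with n < m, an element h ∈ ZMod m of additive order m/n, an n-cycle ρ ∈ Perm(Fin n) (a cycle whose support is all of Fin n), and i ∈ Fin n, define Ψ : ℕ → (Fin n → ZMod m) by Ψ(t)(j) = c·h where c = |{k ∈ {0,…,t−1} : ρ^k(i) = j}|. Then for all a, b ∈ ZMod m, the Hamming distance satisfies hammingDist(Ψ(a.val), Ψ(b.val)) = min((a−b).val, min(n, m − (a−b).val)). In particular, the pullback of the Hamming distance along Ψ is a translation-invariant metric on ZMod m whose associated weight of t is min(t, n, m−t). -/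
/-!
The `j`-th coordinate of `Ψ (s + t) - Ψ s` is `c • h`, where `c` counts the visits to `j` of the
orbit segment `ρ^s i, …, ρ^(s+t-1) i`. As `ρ` is an `n`-cycle, `t % n` points are visited
`t / n + 1` times and the others `t / n` times, and a coordinate changes iff `m / n ∤ c`. Since
`t < m` forces `t / n < m / n`, the number of changed coordinates is `t` if `t < n`, it is
`n - t % n = m - t` if `t / n = m / n - 1`, and it is `n` in between.
-/

open Finset

section Orbit

variable {α : Type*}

def Equiv.Perm.visits [DecidableEq α] (f : Equiv.Perm α) (x y : α) (t : ℕ) : ℕ :=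
  Nat.count (fun k => (f ^ k) x = y) t

theorem Equiv.Perm.visits_add [DecidableEq α] (f : Equiv.Perm α) (x y : α) (s t : ℕ) :
    f.visits x y (s + t) = f.visits x y s + f.visits ((f ^ s) x) y t := by
  rw [visits, visits, visits, Nat.count_add]
  simp only [add_comm s, pow_add, Equiv.Perm.mul_apply]

variable [Fintype α] {f : Equiv.Perm α}

theorem Equiv.Perm.IsCycleOn.card_filter_univ (hf : f.IsCycleOn .univ) (x : α) (p : α → Prop)
    [DecidablePred p] : #{y | p y} = #{v ∈ range (Fintype.card α) | p ((f ^ v) x)} := by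
  have hf' : f.IsCycleOn (univ : Finset α) := coe_univ (α := α) ▸ hf
  symm
  apply card_nbij (fun v => (f ^ v) x)
  · intro v hv
    simp_all
  · intro v hv w hw hvw
    simp only [coe_filter, mem_range] at hv hw
    exact Nat.ModEq.eq_of_lt_of_lt ((hf'.pow_apply_eq_pow_apply (mem_univ x)).1 hvw) hv.1 hw.1
  · intro y hy
    obtain ⟨v, hv, rfl⟩ := hf'.exists_pow_eq (mem_univ x) (mem_univ y)
    exact ⟨v, by simp_all, rfl⟩

theorem Equiv.Perm.IsCycleOn.visits_pow_apply [DecidableEq α] (hf : f.IsCycleOn .univ) (x : α)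
    (v t : ℕ) :
    f.visits x ((f ^ v) x) t
      = t / Fintype.card α + if v % Fintype.card α < t % Fintype.card α then 1 else 0 := by
  have : Nonempty α := ⟨x⟩
  rw [← Nat.count_modEq_card _ Fintype.card_pos, visits]
  congr! 2 with k
  exact (coe_univ (α := α) ▸ hf).pow_apply_eq_pow_apply (mem_univ x)

end Orbit

theorem Finset.card_filter_range_ite_lt (P : ℕ → Prop) [DecidablePred P] {r n : ℕ} (hrn : r ≤ n)
    (a b : ℕ) :
    #{v ∈ range n | P (if v < r then a else b)}
      = (if P a then r else 0) + (if P b then n - r else 0) := by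
  have below : ∀ v ∈ range r, (if P (if v < r then a else b) then 1 else 0)
      = if P a then 1 else 0 := fun v hv => by rw [if_pos (mem_range.1 hv)]
  have above : ∀ v ∈ Ico r n, (if P (if v < r then a else b) then 1 else 0)
      = if P b then 1 else 0 := fun v hv => by rw [if_neg (mem_Ico.1 hv).1.not_gt]
  rw [card_filter, ← sum_range_add_sum_Ico _ hrn, sum_congr rfl below, sum_congr rfl above]
  simp only [sum_const, card_range, Nat.card_Ico, smul_eq_mul, mul_ite, mul_one, mul_zero]

theorem card_filter_range_not_dvd {n M t : ℕ} (hM : 2 ≤ M) (ht : t < n * M) :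
    #{v ∈ range n | ¬ M ∣ t / n + if v < t % n then 1 else 0} = min t (min n (n * M - t)) := by
  have hn : 0 < n := Nat.pos_of_ne_zero (by rintro rfl; simp at ht)
  have hdecomp : n * (t / n) + t % n = t := Nat.div_add_mod t n
  have hr : t % n < n := Nat.mod_lt t hn
  have hq : t / n < M := Nat.div_lt_of_lt_mul ht
  simp only [add_ite, add_zero]
  rw [card_filter_range_ite_lt (fun c => ¬ M ∣ c) hr.le]
  rcases Nat.eq_zero_or_pos (t / n) with hq0 | hq0
  · have : ¬ M ∣ t / n + 1 := by rw [hq0]; exact fun h => by have := Nat.le_of_dvd one_pos h; omega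
    rw [if_pos this, if_neg (not_not.2 (hq0 ▸ dvd_zero M))]
    have : n * 2 ≤ n * M := Nat.mul_le_mul_left n hM
    rw [hq0] at hdecomp
    omega
  · have hnq : ¬ M ∣ t / n := fun h => (Nat.eq_zero_of_dvd_of_lt h hq ▸ hq0).false
    rw [if_pos hnq]
    have : n ≤ n * (t / n) := Nat.le_mul_of_pos_right n hq0
    by_cases hlast : t / n + 1 = M
    · rw [if_neg (not_not.2 (hlast ▸ dvd_refl M))]
      have : n * (t / n) + n = n * M := by rw [← hlast, mul_add, mul_one]
      omega
    · have : ¬ M ∣ t / n + 1 := fun h => hlast (le_antisymm (by omega) (Nat.le_of_dvd (by omega) h))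
      rw [if_pos this]
      have : n * (t / n + 2) ≤ n * M := Nat.mul_le_mul_left n (by omega)
      rw [mul_add] at this
      omega

theorem Equiv.Perm.IsCycleOn.hammingDist_visits_nsmul {α G : Type*} [Fintype α] [DecidableEq α]
    [AddGroup G] [DecidableEq G] {f : Equiv.Perm α} (hf : f.IsCycleOn .univ) (x : α) {g : G}
    (hg : 2 ≤ addOrderOf g) (s t : ℕ) (ht : t < Fintype.card α * addOrderOf g) :
    hammingDist (fun y => f.visits x y (s + t) • g) (fun y => f.visits x y s • g)
      = min t (min (Fintype.card α) (Fintype.card α * addOrderOf g - t)) := by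
  simp only [hammingDist, visits_add, add_nsmul, ne_eq, add_eq_left,
    ← addOrderOf_dvd_iff_nsmul_eq_zero]
  rw [hf.card_filter_univ ((f ^ s) x)]
  simp only [hf.visits_pow_apply]
  rw [← card_filter_range_not_dvd hg ht]
  congr! 3 with v hv
  rw [Nat.mod_eq_of_lt (mem_range.1 hv)]

theorem ZMod.min_val_neg {m : ℕ} [NeZero m] (n : ℕ) (x : ZMod m) :
    min (-x).val (min n (m - (-x).val)) = min x.val (min n (m - x.val)) := by
  rw [ZMod.neg_val]
  split_ifs with hx
  · simp [hx]
  · have := x.val_lt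
    omega

theorem stmt_6_general (m n : ℕ) (hdvd : n ∣ m) (hlt : n < m)
    (h : ZMod m) (hord : addOrderOf h = m / n)
    (ρ : Equiv.Perm (Fin n))
    (hρ : ∀ x y : Fin n, ∃ k : ℕ, (ρ ^ k) x = y)
    (i : Fin n)
    (Ψ : ℕ → Fin n → ZMod m)
    (hΨ : ∀ t j, Ψ t j = ((Finset.range t).filter fun k => (ρ ^ k) i = j).card • h) :
    ∀ a b : ZMod m,
      hammingDist (Ψ a.val) (Ψ b.val)
        = min (a - b).val (min n (m - (a - b).val)) := by
  have : NeZero m := ⟨(n.zero_le.trans_lt hlt).ne'⟩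
  have hm : n * addOrderOf h = m := by rw [hord, Nat.mul_div_cancel' hdvd]
  have hord2 : 2 ≤ addOrderOf h := Nat.lt_of_mul_lt_mul_left (a := n) (by rwa [mul_one, hm])
  have hcyc : ρ.IsCycleOn .univ :=
    ⟨Set.bijOn_univ.2 ρ.bijective, fun x _ y _ => (hρ x y).elim fun k hk => ⟨k, by simpa⟩⟩
  obtain rfl : Ψ = fun t j => ρ.visits i j t • h := by
    funext t j
    rw [hΨ, Equiv.Perm.visits, Nat.count_eq_card_filter_range]
  have key (s t : ℕ) (ht : t < m) :
      hammingDist (fun j => ρ.visits i j (s + t) • h) (fun j => ρ.visits i j s • h)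
        = min t (min n (m - t)) := by
    simpa [hm] using hcyc.hammingDist_visits_nsmul i hord2 s t (by simpa [hm])
  intro a b
  rcases le_total b.val a.val with hba | hab
  · rw [← Nat.add_sub_of_le hba, ← ZMod.val_sub hba]
    exact key _ _ (ZMod.val_lt _)
  · rw [hammingDist_comm, ← Nat.add_sub_of_le hab, ← ZMod.val_sub hab, key _ _ (ZMod.val_lt _),
      ← neg_sub, ZMod.min_val_neg]

/-- With `Ψ` as in the isometric-embedding construction
(`Ψ(t)(j) = |{k < t : ρ^k i = j}| • h`), the pullback of the Hamming distance
along `Ψ` on `ZMod m` is given by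
`hammingDist (Ψ a.val) (Ψ b.val) = min (a-b).val (min n (m - (a-b).val))`,
i.e. it is the translation-invariant metric with weight `min(t, n, m-t)`. -/
theorem stmt_6 (m n : ℕ) (hn : 0 < n) (hdvd : n ∣ m) (hlt : n < m)
    (h : ZMod m) (hord : addOrderOf h = m / n)
    (ρ : Equiv.Perm (Fin n))
    (hρ : ∀ x y : Fin n, ∃ k : ℕ, (ρ ^ k) x = y)
    (i : Fin n)
    (Ψ : ℕ → Fin n → ZMod m)
    (hΨ : ∀ t j, Ψ t j = ((Finset.range t).filter fun k => (ρ ^ k) i = j).card • h) :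
    ∀ a b : ZMod m,
      hammingDist (Ψ a.val) (Ψ b.val)
        = min (a - b).val (min n (m - (a - b).val)) :=
  stmt_6_general m n hdvd hlt h hord ρ hρ i Ψ hΨ
end

section
/- Let q ≥ 2 and n ≥ 1 be integers, and define φ : (Fin n → ZMod q) → ZMod (q^n) by φ(a) = Σ_{i : Fin n} (a i).val · q^(n−1−i) (reduced mod q^n). Then φ is a bijection, and for all a, b : Fin n → ZMod q, d_q(φ(a), φ(b)) = d_RT(a, b). Hence (ZMod (q^n), d_q) is isometric to ((ZMod q)^n, d_RT). -/
/-- The `q`-adic distance on `ZMod (q^n)`: the least `i` (necessarily in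
`{0,…,n}`) such that `q^(n-i)` divides the natural representative of `x - y`. -/
noncomputable def qadicDist (q n : ℕ) (x y : ZMod (q ^ n)) : ℕ :=
  sInf {i : ℕ | q ^ (n - i) ∣ (x - y).val}

/-- The Rosenbloom–Tsfasman distance on `Fin n → A`: `0` if the tuples are
equal, and otherwise one plus the largest index where they differ. -/
noncomputable def rtDist {A : Type*} {n : ℕ} (a b : Fin n → A) : ℕ :=
  sSup {i : ℕ | ∃ j : Fin n, a j ≠ b j ∧ i = (j : ℕ) + 1}

/-!
Reading the coordinates backwards, `φ a - φ b` lifts to the integer `∑ cᵢ qⁱ` whose digits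
`cᵢ = (a (n-1-i)).val - (b (n-1-i)).val` satisfy `|cᵢ| < q`, and such a sum is divisible by `q^m`
exactly when its `m` lowest digits vanish. Since `q^(n-i)` divides `q^n`, divisibility of the
representative in `ZMod (q^n)` is that of the integer, so `q^(n-i) ∣ (φ a - φ b).val` iff `a` and
`b` agree from coordinate `i` on. The least such `i` is `d_q` by definition and `d_RT` because the
admissible `i` are the upper bounds of the `j + 1` with `a j ≠ b j`. The case `i = 0` gives
injectivity, and both sides have `q^n` elements.
-/

namespace Int

theorem pow_succ_dvd_add_mul_iff {q r s : ℤ} (m : ℕ) (hr : |r| < q) :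
    q ^ (m + 1) ∣ r + q * s ↔ r = 0 ∧ q ^ m ∣ s := by
  have hq : q ≠ 0 := (lt_of_le_of_lt (abs_nonneg r) hr).ne'
  constructor
  · intro h
    have hqr : q ∣ r :=
      (dvd_add_left (dvd_mul_right q s)).mp ((dvd_pow_self q m.succ_ne_zero).trans h)
    obtain rfl := Int.eq_zero_of_abs_lt_dvd hqr hr
    rw [zero_add, pow_succ'] at h
    exact ⟨rfl, (mul_dvd_mul_iff_left hq).mp h⟩
  · rintro ⟨rfl, h⟩
    rw [zero_add, pow_succ']
    exact mul_dvd_mul_left q h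

theorem pow_dvd_sum_mul_pow_iff {q : ℤ} :
    ∀ {n : ℕ} (m : ℕ) (c : Fin n → ℤ), (∀ i, |c i| < q) →
      (q ^ m ∣ ∑ i, c i * q ^ (i : ℕ) ↔ ∀ i : Fin n, (i : ℕ) < m → c i = 0)
  | _, 0, c, _ => by simp
  | 0, m + 1, c, _ => by simp
  | n + 1, m + 1, c, hc => by
    have hshift : ∑ i : Fin n, c i.succ * q ^ (i.succ : ℕ)
        = q * ∑ i : Fin n, c i.succ * q ^ (i : ℕ) := by
      rw [Finset.mul_sum]
      exact Finset.sum_congr rfl fun i _ => by rw [Fin.val_succ, pow_succ]; ring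
    rw [Fin.sum_univ_succ, hshift, Fin.val_zero, pow_zero, mul_one,
      pow_succ_dvd_add_mul_iff m (hc 0),
      pow_dvd_sum_mul_pow_iff m (fun i => c i.succ) (fun i => hc i.succ), Fin.forall_fin_succ]
    simp [Fin.val_succ]

end Int

theorem ZMod.dvd_val_intCast_iff {N k : ℕ} [NeZero N] (hk : k ∣ N) (x : ℤ) :
    k ∣ (x : ZMod N).val ↔ (k : ℤ) ∣ x := by
  rw [← Int.natCast_dvd_natCast, ZMod.val_intCast, Int.dvd_iff_emod_eq_zero,
    Int.dvd_iff_emod_eq_zero, Int.emod_emod_of_dvd x (Int.natCast_dvd_natCast.mpr hk)]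

theorem rtDist_eq_sInf {A : Type*} {n : ℕ} (a b : Fin n → A) :
    rtDist a b = sInf {i : ℕ | ∀ j : Fin n, i ≤ j → a j = b j} := by
  set S := {i : ℕ | ∃ j : Fin n, a j ≠ b j ∧ i = (j : ℕ) + 1}
  have hS : {i : ℕ | ∀ j : Fin n, i ≤ j → a j = b j} = upperBounds S := by
    ext i
    constructor
    · rintro h _ ⟨j, hne, rfl⟩
      by_contra hlt
      exact hne (h j (by omega))
    · intro h j hij
      by_contra hne
      have := h ⟨j, hne, rfl⟩
      omega
  change sSup S = _
  rw [hS]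
  rcases S.eq_empty_or_nonempty with hempty | hne
  · simp [hempty]
  · refine (csInf_upperBounds_eq_csSup ⟨n, ?_⟩ hne).symm
    rintro _ ⟨j, -, rfl⟩
    exact j.isLt

def digitValue (q : ℕ) {n : ℕ} (a : Fin n → ZMod q) : ℕ :=
  ∑ i, (a i).val * q ^ (n - 1 - (i : ℕ))

theorem digitValue_sub_digitValue (q : ℕ) {n : ℕ} (a b : Fin n → ZMod q) :
    (digitValue q a : ℤ) - digitValue q b
      = ∑ i : Fin n, (((a i.rev).val : ℤ) - (b i.rev).val) * (q : ℤ) ^ (i : ℕ) := by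
  rw [← Equiv.sum_comp Fin.revPerm]
  simp only [digitValue, Nat.cast_sum, Nat.cast_mul, Nat.cast_pow, ← Finset.sum_sub_distrib,
    ← sub_mul, Fin.revPerm_apply, Fin.rev_rev]
  refine Finset.sum_congr rfl fun i _ => ?_
  rw [Fin.val_rev]
  congr 2
  omega

theorem pow_sub_dvd_val_digitValue_sub_iff {q n : ℕ} [NeZero q] (a b : Fin n → ZMod q) (i : ℕ) :
    q ^ (n - i) ∣ ((digitValue q a : ZMod (q ^ n)) - digitValue q b).val
      ↔ ∀ j : Fin n, i ≤ j → a j = b j := by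
  have hcast : (digitValue q a : ZMod (q ^ n)) - digitValue q b
      = (((digitValue q a : ℤ) - digitValue q b : ℤ) : ZMod (q ^ n)) := by
    push_cast
    rfl
  have hdigit (j : Fin n) : |((a j.rev).val : ℤ) - (b j.rev).val| < q :=
    abs_sub_lt_of_nonneg_of_lt (Nat.cast_nonneg _) (by exact_mod_cast (a j.rev).val_lt)
      (Nat.cast_nonneg _) (by exact_mod_cast (b j.rev).val_lt)
  rw [hcast, ZMod.dvd_val_intCast_iff (pow_dvd_pow q (n.sub_le i)), digitValue_sub_digitValue,
    Nat.cast_pow, Int.pow_dvd_sum_mul_pow_iff _ _ hdigit, ← Fin.revPerm.forall_congr_right]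
  refine forall_congr' fun j => ?_
  simp only [Fin.revPerm_apply, Fin.rev_rev, Fin.val_rev, sub_eq_zero, Nat.cast_inj,
    (ZMod.val_injective q).eq_iff]
  constructor <;> intro h hj <;> apply h <;> omega

theorem qadicDist_digitValue {q n : ℕ} [NeZero q] (a b : Fin n → ZMod q) :
    qadicDist q n (digitValue q a) (digitValue q b) = rtDist a b := by
  simp only [qadicDist, pow_sub_dvd_val_digitValue_sub_iff, rtDist_eq_sInf]

theorem digitValue_cast_injective {q n : ℕ} [NeZero q] :
    Function.Injective fun a : Fin n → ZMod q => (digitValue q a : ZMod (q ^ n)) := by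
  intro a b hab
  funext j
  refine (pow_sub_dvd_val_digitValue_sub_iff a b 0).mp ?_ j (Nat.zero_le j)
  simp only at hab
  simp [hab]

theorem stmt_7_general (q n : ℕ) (hq : 2 ≤ q)
    (φ : (Fin n → ZMod q) → ZMod (q ^ n))
    (hφ : ∀ a, φ a = ((∑ i : Fin n, (a i).val * q ^ (n - 1 - (i : ℕ)) : ℕ) : ZMod (q ^ n))) :
    Function.Bijective φ ∧
      ∀ a b : Fin n → ZMod q, qadicDist q n (φ a) (φ b) = rtDist a b := by
  have : NeZero q := ⟨by omega⟩
  obtain rfl : φ = fun a => (digitValue q a : ZMod (q ^ n)) := funext hφ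
  refine ⟨?_, qadicDist_digitValue⟩
  rw [Fintype.bijective_iff_injective_and_card]
  exact ⟨digitValue_cast_injective, by simp⟩

/-- The map `φ(a) = Σ_i (a i).val · q^(n-1-i) mod q^n` is a
bijection from `(ZMod q)^n` to `ZMod (q^n)` carrying the RT distance to the
`q`-adic distance; hence `(ZMod (q^n), d_q) ≃ ((ZMod q)^n, d_RT)`. -/
theorem stmt_7 (q n : ℕ) (hq : 2 ≤ q) (hn : 1 ≤ n)
    (φ : (Fin n → ZMod q) → ZMod (q ^ n))
    (hφ : ∀ a, φ a = ((∑ i : Fin n, (a i).val * q ^ (n - 1 - (i : ℕ)) : ℕ) : ZMod (q ^ n))) :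
    Function.Bijective φ ∧
      ∀ a b : Fin n → ZMod q, qadicDist q n (φ a) (φ b) = rtDist a b :=
  stmt_7_general q n hq φ hφ
end

section
/- Let G₁, G₂ be finite groups with |G₁| = |G₂|, and let H₁ ≤ G₁, H₂ ≤ G₂ be nontrivial proper subgroups with |H₁| = |H₂|. Let w₁ be a weight function on H₁ and w₂ a weight function on H₂, and let τ : H₁ → H₂ be a bijection that is an isometry for the induced invariant metrics, i.e. w₂(τ(x)·τ(y)⁻¹) = w₁(x·y⁻¹) for all x, y ∈ H₁. Let d̃₁ and d̃₂ be the extended distances on G₁ and G₂ determined by (H₁, w₁) and (H₂, w₂) respectively. Then there exists a bijection η : G₁ → G₂ extending τ (η(h) = τ(h) for all h ∈ H₁) such that d̃₂(η(x), η(y)) = d̃₁(x, y) for all x, y ∈ G₁. -/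
/-- A weight function on a group `H`: it vanishes exactly at the identity, is
symmetric under inversion, and is subadditive. -/
def IsWeight {H : Type*} [Group H] (w : H → ℕ) : Prop :=
  w 1 = 0 ∧ (∀ h, w h = 0 → h = 1) ∧ (∀ h, w h⁻¹ = w h) ∧
    ∀ h h', w (h * h') ≤ w h + w h'

open Classical in
/-- The extended distance on a finite group `G` determined by a subgroup `H`
with weight `w`: `w (x * y⁻¹)` if `x * y⁻¹ ∈ H`, and `M + 1` otherwise, where
`M` is the maximal value of `w` on `H`. -/
noncomputable def extDist {G : Type*} [Group G] [Fintype G] (H : Subgroup G)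
    (w : H → ℕ) (x y : G) : ℕ :=
  if hxy : x * y⁻¹ ∈ H then w ⟨x * y⁻¹, hxy⟩
  else (Finset.univ.sup fun h : H => w h) + 1

private theorem stmt_11_aux {G₁ G₂ : Type*} [Group G₁] [Fintype G₁] [Group G₂] [Fintype G₂]
    (hG : Fintype.card G₁ = Fintype.card G₂)
    (H₁ : Subgroup G₁) (H₂ : Subgroup G₂)
    (hH : Nat.card H₁ = Nat.card H₂)
    (w₁ : H₁ → ℕ) (w₂ : H₂ → ℕ)
    (τ : H₁ ≃ H₂)
    (hτ : ∀ x y : H₁, w₂ (τ x * (τ y)⁻¹) = w₁ (x * y⁻¹)) :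
    ∃ η : G₁ ≃ G₂,
      (∀ h : H₁, η (h : G₁) = ((τ h : H₂) : G₂)) ∧
      ∀ x y : G₁, extDist H₂ w₂ (η x) (η y) = extDist H₁ w₁ x y := by
  classical
  letI s₁ : Setoid G₁ := QuotientGroup.rightRel H₁
  letI s₂ : Setoid G₂ := QuotientGroup.rightRel H₂
  have hrel₁ : ∀ a b : G₁, (⟦a⟧ : Quotient s₁) = ⟦b⟧ ↔ b * a⁻¹ ∈ H₁ := fun a b => by
    rw [Quotient.eq]; exact QuotientGroup.rightRel_apply
  have hrel₂ : ∀ a b : G₂, (⟦a⟧ : Quotient s₂) = ⟦b⟧ ↔ b * a⁻¹ ∈ H₂ := fun a b => by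
    rw [Quotient.eq]; exact QuotientGroup.rightRel_apply
  -- normalized isometry
  set τ₀ : H₁ ≃ H₂ := τ.trans (Equiv.mulRight (τ 1)⁻¹) with hτ₀def
  have hτ₀ : ∀ h : H₁, τ₀ h = τ h * (τ 1)⁻¹ := fun h => rfl
  have hτ₀w : ∀ x y : H₁, w₂ (τ₀ x * (τ₀ y)⁻¹) = w₁ (x * y⁻¹) := by
    intro x y
    have h : τ₀ x * (τ₀ y)⁻¹ = τ x * (τ y)⁻¹ := by
      rw [hτ₀, hτ₀]; group
    rw [h]; exact hτ x y
  have hτ₀1 : τ₀ 1 = 1 := by rw [hτ₀]; group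
  have hw₂τ₀ : ∀ h : H₁, w₂ (τ₀ h) = w₁ h := fun h => by
    have := hτ₀w h 1
    simpa [hτ₀1] using this
  -- equality of maxima
  have hM : (Finset.univ.sup fun h : H₂ => w₂ h) = Finset.univ.sup fun h : H₁ => w₁ h := by
    apply le_antisymm
    · refine Finset.sup_le fun h _ => ?_
      have : w₂ h = w₁ (τ₀.symm h) := by
        rw [← hw₂τ₀ (τ₀.symm h), Equiv.apply_symm_apply]
      rw [this]; exact Finset.le_sup (Finset.mem_univ _)
    · refine Finset.sup_le fun h _ => ?_
      rw [← hw₂τ₀ h]; exact Finset.le_sup (Finset.mem_univ _)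
  -- cardinality of quotients
  haveI : Fintype (Quotient s₁) := Fintype.ofFinite _
  haveI : Fintype (Quotient s₂) := Fintype.ofFinite _
  have k₁ : Nat.card (Quotient s₁) * Nat.card H₁ = Nat.card G₁ := by
    rw [Nat.card_congr (QuotientGroup.quotientRightRelEquivQuotientLeftRel H₁), mul_comm,
      ← Subgroup.index_eq_card]
    exact Subgroup.card_mul_index H₁
  have k₂ : Nat.card (Quotient s₂) * Nat.card H₂ = Nat.card G₂ := by
    rw [Nat.card_congr (QuotientGroup.quotientRightRelEquivQuotientLeftRel H₂), mul_comm,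
      ← Subgroup.index_eq_card]
    exact Subgroup.card_mul_index H₂
  have hq : Fintype.card (Quotient s₁) = Fintype.card (Quotient s₂) := by
    have hpos : 0 < Nat.card H₁ := Nat.card_pos
    have : Nat.card (Quotient s₁) * Nat.card H₁ = Nat.card (Quotient s₂) * Nat.card H₁ := by
      rw [k₁, hH, k₂, Nat.card_eq_fintype_card, Nat.card_eq_fintype_card, hG]
    have := Nat.eq_of_mul_eq_mul_right hpos this
    simpa [Nat.card_eq_fintype_card] using this
  set q₁0 : Quotient s₁ := ⟦(1 : G₁)⟧ with hq₁0
  set q₂0 : Quotient s₂ := ⟦(1 : G₂)⟧ with hq₂0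
  set f₀ : Quotient s₁ ≃ Quotient s₂ := Fintype.equivOfCardEq hq with hf₀
  set f : Quotient s₁ ≃ Quotient s₂ := f₀.trans (Equiv.swap (f₀ q₁0) q₂0) with hfdef
  have hf0 : f q₁0 = q₂0 := by
    rw [hfdef]; simp [Equiv.swap_apply_left]
  -- representatives
  set rep₁ : Quotient s₁ → G₁ := fun q => if q = q₁0 then 1 else q.out with hrep₁def
  set rep₂ : Quotient s₂ → G₂ := fun q => if q = q₂0 then 1 else q.out with hrep₂def
  have hrep₁ : ∀ q, (⟦rep₁ q⟧ : Quotient s₁) = q := by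
    intro q; rw [hrep₁def]
    by_cases h : q = q₁0
    · simp [h, hq₁0]
    · simp [h, Quotient.out_eq]
  have hrep₂ : ∀ q, (⟦rep₂ q⟧ : Quotient s₂) = q := by
    intro q; rw [hrep₂def]
    by_cases h : q = q₂0
    · simp [h, hq₂0]
    · simp [h, Quotient.out_eq]
  have hrep₁0 : rep₁ q₁0 = 1 := by rw [hrep₁def]; simp
  have hrep₂0 : rep₂ q₂0 = 1 := by rw [hrep₂def]; simp
  have hmem₁ : ∀ x : G₁, x * (rep₁ ⟦x⟧)⁻¹ ∈ H₁ := fun x =>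
    (hrel₁ (rep₁ ⟦x⟧) x).mp (hrep₁ ⟦x⟧)
  have hmem₁' : ∀ (z : G₁) (q : Quotient s₁), (⟦z⟧ : Quotient s₁) = q → z * (rep₁ q)⁻¹ ∈ H₁ :=
    fun z q hz => (hrel₁ (rep₁ q) z).mp (by rw [hrep₁, hz])
  -- the coset-wise isometries
  set σ : Quotient s₁ → (H₁ ≃ H₂) := fun q => if q = q₁0 then τ else τ₀ with hσdef
  have hσw : ∀ q (a b : H₁), w₂ (σ q a * (σ q b)⁻¹) = w₁ (a * b⁻¹) := by
    intro q a b
    rw [hσdef]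
    by_cases h : q = q₁0
    · simp only [h, if_pos rfl]; exact hτ a b
    · simp only [if_neg h]; exact hτ₀w a b
  -- lift of σ to a function on G₁
  set u : Quotient s₁ → G₁ → G₂ := fun q g => if h : g ∈ H₁ then ((σ q ⟨g, h⟩ : H₂) : G₂) else 1
    with hudef
  have hu : ∀ q (g : G₁) (hg : g ∈ H₁), u q g = ((σ q ⟨g, hg⟩ : H₂) : G₂) := by
    intro q g hg; rw [hudef]; simp [hg]
  -- the map
  set F : G₁ → G₂ := fun x => u ⟦x⟧ (x * (rep₁ ⟦x⟧)⁻¹) * rep₂ (f ⟦x⟧) with hFdef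
  have hFval : ∀ x : G₁, F x = ((σ ⟦x⟧ ⟨x * (rep₁ ⟦x⟧)⁻¹, hmem₁ x⟩ : H₂) : G₂) * rep₂ (f ⟦x⟧) := by
    intro x
    rw [show F x = u ⟦x⟧ (x * (rep₁ ⟦x⟧)⁻¹) * rep₂ (f ⟦x⟧) from rfl, hu _ _ (hmem₁ x)]
  have hFq : ∀ (z : G₁) (q : Quotient s₁) (hz : (⟦z⟧ : Quotient s₁) = q),
      F z = ((σ q ⟨z * (rep₁ q)⁻¹, hmem₁' z q hz⟩ : H₂) : G₂) * rep₂ (f q) := by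
    intro z q hz
    subst hz
    exact hFval z
  have hFmk : ∀ x : G₁, (⟦F x⟧ : Quotient s₂) = f ⟦x⟧ := by
    intro x
    have hm : F x * (rep₂ (f ⟦x⟧))⁻¹ ∈ H₂ := by
      rw [hFval, mul_inv_cancel_right]
      exact SetLike.coe_mem _
    conv_rhs => rw [← hrep₂ (f ⟦x⟧)]
    exact ((hrel₂ (rep₂ (f ⟦x⟧)) (F x)).mpr hm).symm
  have hFinj : Function.Injective F := by
    intro x y h
    have hqq : (⟦x⟧ : Quotient s₁) = ⟦y⟧ := f.injective (by rw [← hFmk, ← hFmk, h])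
    have h2 : F y = ((σ ⟦x⟧ ⟨y * (rep₁ ⟦x⟧)⁻¹, hmem₁' y ⟦x⟧ hqq.symm⟩ : H₂) : G₂)
        * rep₂ (f ⟦x⟧) := hFq y ⟦x⟧ hqq.symm
    rw [hFval, h2] at h
    have h3 := mul_right_cancel h
    have h4 : (⟨x * (rep₁ ⟦x⟧)⁻¹, hmem₁ x⟩ : H₁) = ⟨y * (rep₁ ⟦x⟧)⁻¹, _⟩ :=
      (σ ⟦x⟧).injective (Subtype.ext h3)
    have h5 : x * (rep₁ ⟦x⟧)⁻¹ = y * (rep₁ ⟦x⟧)⁻¹ := congrArg Subtype.val h4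
    exact mul_right_cancel h5
  have hFbij : Function.Bijective F :=
    (Fintype.bijective_iff_injective_and_card F).mpr ⟨hFinj, hG⟩
  refine ⟨Equiv.ofBijective F hFbij, ?_, ?_⟩
  · -- extension of τ
    intro h
    have hqh : (⟦(h : G₁)⟧ : Quotient s₁) = q₁0 := by
      rw [hq₁0]
      exact (hrel₁ _ _).mpr (by simpa using h.2)
    have : Equiv.ofBijective F hFbij (h : G₁) = F (h : G₁) := rfl
    rw [this, hFval]
    have e1 : F ((h : G₁)) = F ((h:G₁)) := rfl
    have hcoe : ((σ ⟦(h : G₁)⟧ ⟨(h:G₁) * (rep₁ ⟦(h:G₁)⟧)⁻¹, hmem₁ _⟩ : H₂) : G₂)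
        = ((τ h : H₂) : G₂) := by
      have harg : (⟨(h:G₁) * (rep₁ ⟦(h:G₁)⟧)⁻¹, hmem₁ _⟩ : H₁) = h := by
        apply Subtype.ext
        simp [hqh, hrep₁0]
      have hσ1 : σ ⟦(h:G₁)⟧ = τ := by rw [hqh, hσdef]; simp
      rw [harg, hσ1]
    rw [hcoe, hqh, hf0, hrep₂0, mul_one]
  · -- isometry
    intro x y
    have hEx : ∀ z : G₁, Equiv.ofBijective F hFbij z = F z := fun z => rfl
    rw [hEx, hEx]
    by_cases hxy : x * y⁻¹ ∈ H₁
    · -- same coset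
      have hqq : (⟦y⟧ : Quotient s₁) = ⟦x⟧ := (hrel₁ y x).mpr hxy
      have hprod : F x * (F y)⁻¹
          = ((σ ⟦x⟧ ⟨x * (rep₁ ⟦x⟧)⁻¹, hmem₁ x⟩
              * (σ ⟦x⟧ ⟨y * (rep₁ ⟦x⟧)⁻¹, hmem₁' y ⟦x⟧ hqq⟩)⁻¹ : H₂) : G₂) := by
        rw [hFval x, hFq y ⟦x⟧ hqq]
        push_cast
        group
      have hmem : F x * (F y)⁻¹ ∈ H₂ := by rw [hprod]; exact SetLike.coe_mem _
      have hab : (((⟨x * (rep₁ ⟦x⟧)⁻¹, hmem₁ x⟩ : H₁)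
          * (⟨y * (rep₁ ⟦x⟧)⁻¹, hmem₁' y ⟦x⟧ hqq⟩ : H₁)⁻¹ : H₁) : G₁) = x * y⁻¹ := by
        push_cast
        group
      rw [extDist, extDist, dif_pos hmem, dif_pos hxy]
      have e1 : (⟨F x * (F y)⁻¹, hmem⟩ : H₂)
          = σ ⟦x⟧ ⟨x * (rep₁ ⟦x⟧)⁻¹, hmem₁ x⟩
            * (σ ⟦x⟧ ⟨y * (rep₁ ⟦x⟧)⁻¹, hmem₁' y ⟦x⟧ hqq⟩)⁻¹ := Subtype.ext hprod
      have e2 : (⟨x * y⁻¹, hxy⟩ : H₁) = ⟨x * (rep₁ ⟦x⟧)⁻¹, hmem₁ x⟩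
          * (⟨y * (rep₁ ⟦x⟧)⁻¹, hmem₁' y ⟦x⟧ hqq⟩ : H₁)⁻¹ := Subtype.ext hab.symm
      rw [e1, e2]
      exact hσw ⟦x⟧ _ _
    · -- different cosets
      have hqq : (⟦x⟧ : Quotient s₁) ≠ ⟦y⟧ := fun h => hxy ((hrel₁ y x).mp h.symm)
      have hmem : F x * (F y)⁻¹ ∉ H₂ := by
        intro hm
        exact hqq (f.injective (by rw [← hFmk, ← hFmk]; exact ((hrel₂ (F y) (F x)).mpr hm).symm))
      rw [extDist, extDist, dif_neg hmem, dif_neg hxy, hM]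

/-- An isometry `τ` between nontrivial proper subgroups
`H₁ ≤ G₁`, `H₂ ≤ G₂` of equal orders (with `|G₁| = |G₂|`), with respect to the
invariant metrics of weight functions `w₁`, `w₂`, extends to a bijection
`η : G₁ → G₂` which is an isometry for the extended distances. -/
theorem stmt_11 {G₁ G₂ : Type*} [Group G₁] [Fintype G₁] [Group G₂] [Fintype G₂]
    (hG : Fintype.card G₁ = Fintype.card G₂)
    (H₁ : Subgroup G₁) (H₂ : Subgroup G₂)
    (hH₁bot : H₁ ≠ ⊥) (hH₁top : H₁ ≠ ⊤) (hH₂bot : H₂ ≠ ⊥) (hH₂top : H₂ ≠ ⊤)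
    (hH : Nat.card H₁ = Nat.card H₂)
    (w₁ : H₁ → ℕ) (w₂ : H₂ → ℕ) (hw₁ : IsWeight w₁) (hw₂ : IsWeight w₂)
    (τ : H₁ ≃ H₂)
    (hτ : ∀ x y : H₁, w₂ (τ x * (τ y)⁻¹) = w₁ (x * y⁻¹)) :
    ∃ η : G₁ ≃ G₂,
      (∀ h : H₁, η (h : G₁) = ((τ h : H₂) : G₂)) ∧
      ∀ x y : G₁, extDist H₂ w₂ (η x) (η y) = extDist H₁ w₁ x y := by
  exact stmt_11_aux hG H₁ H₂ hH w₁ w₂ τ hτ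
end

section
/- Let G₁ and G₂ be finite groups with |G₁| = |G₂| = m, where m > 1 is not prime. Then there exist right-invariant metrics d₁ on G₁ and d₂ on G₂ and a bijection η : G₁ → G₂ such that d₂(η(x), η(y)) = d₁(x, y) for all x, y ∈ G₁, and moreover neither d₁ nor d₂ is the discrete (Hamming) metric: for each i ∈ {1,2} there exist elements x ≠ y in Gᵢ with dᵢ(x, y) ≥ 2. -/
/-- An integer-valued right-invariant metric on a group `G`. -/
def IsRightInvMetric {G : Type*} [Group G] (d : G → G → ℕ) : Prop :=
  (∀ x y, d x y = 0 ↔ x = y) ∧ (∀ x y, d x y = d y x) ∧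
  (∀ x y z, d x y ≤ d x z + d z y) ∧ (∀ x y h, d (x * h) (y * h) = d x y)

open Classical in
/-- The subgroup-based metric: 0 on the diagonal, 1 within a right coset, 2 otherwise. -/
noncomputable def subgroupDist {G : Type*} [Group G] (H : Subgroup G) (x y : G) : ℕ :=
  if x = y then 0 else if x * y⁻¹ ∈ H then 1 else 2

open Classical in
lemma subgroupDist_isMetric {G : Type*} [Group G] (H : Subgroup G) :
    IsRightInvMetric (subgroupDist H) := by
  refine ⟨?_, ?_, ?_, ?_⟩
  · intro x y
    unfold subgroupDist
    split <;> simp_all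
    split <;> simp
  · intro x y
    unfold subgroupDist
    by_cases hxy : x = y
    · simp [hxy]
    · have : x * y⁻¹ ∈ H ↔ y * x⁻¹ ∈ H := by
        constructor <;> intro h
        · have := H.inv_mem h; simpa using this
        · have := H.inv_mem h; simpa using this
      simp only [hxy, Ne.symm hxy, if_neg, if_false]
      split <;> split <;> tauto
  · intro x y z
    unfold subgroupDist
    by_cases hxy : x = y
    · simp [hxy]
    by_cases hxz : x = z
    · subst hxz; simp [hxy]
    by_cases hzy : z = y
    · subst hzy; simp [hxy]
    simp only [hxy, hxz, hzy, if_neg, if_false]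
    by_cases h1 : x * z⁻¹ ∈ H <;> by_cases h2 : z * y⁻¹ ∈ H
    · have : x * y⁻¹ ∈ H := by
        have := H.mul_mem h1 h2
        simpa [mul_assoc] using this
      simp [h1, h2, this]
    all_goals simp [h1, h2] <;> split <;> omega
  · intro x y h
    unfold subgroupDist
    have h1 : x * h = y * h ↔ x = y := mul_left_inj h
    have h2 : (x * h) * (y * h)⁻¹ = x * y⁻¹ := by group
    rw [h1, h2]

/-- Any two finite groups of the same non-prime order `m > 1`
are isometric with respect to suitable right-invariant metrics, neither of
which is the discrete (Hamming) metric. -/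
theorem stmt_13 {G₁ G₂ : Type*} [Group G₁] [Fintype G₁] [Group G₂] [Fintype G₂]
    (m : ℕ) (hm₁ : Fintype.card G₁ = m) (hm₂ : Fintype.card G₂ = m)
    (hm : 1 < m) (hmp : ¬ m.Prime) :
    ∃ (d₁ : G₁ → G₁ → ℕ) (d₂ : G₂ → G₂ → ℕ) (η : G₁ ≃ G₂),
      IsRightInvMetric d₁ ∧ IsRightInvMetric d₂ ∧
      (∀ x y : G₁, d₂ (η x) (η y) = d₁ x y) ∧
      (∃ x y : G₁, x ≠ y ∧ 2 ≤ d₁ x y) ∧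
      (∃ x y : G₂, x ≠ y ∧ 2 ≤ d₂ x y) := by
  classical
  set p := m.minFac with hp_def
  have hp : p.Prime := Nat.minFac_prime (by omega)
  have hpd : p ∣ m := Nat.minFac_dvd m
  have hpm : p < m := by
    rcases lt_or_eq_of_le (Nat.le_of_dvd (by omega) hpd) with h | h
    · exact h
    · exact absurd (h ▸ hp) hmp
  haveI := Fact.mk hp
  obtain ⟨g₁, hg₁⟩ := exists_prime_orderOf_dvd_card (G := G₁) p (hm₁ ▸ hpd)
  obtain ⟨g₂, hg₂⟩ := exists_prime_orderOf_dvd_card (G := G₂) p (hm₂ ▸ hpd)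
  set H₁ := Subgroup.zpowers g₁ with hH₁
  set H₂ := Subgroup.zpowers g₂ with hH₂
  have hcH₁ : Nat.card H₁ = p := by rw [Nat.card_zpowers, hg₁]
  have hcH₂ : Nat.card H₂ = p := by rw [Nat.card_zpowers, hg₂]
  -- cards of quotients agree
  have hq₁ : Nat.card (G₁ ⧸ H₁) * p = m := by
    have := Subgroup.card_eq_card_quotient_mul_card_subgroup (s := H₁)
    rw [hcH₁] at this
    rw [← this, Nat.card_eq_fintype_card, hm₁]
  have hq₂ : Nat.card (G₂ ⧸ H₂) * p = m := by
    have := Subgroup.card_eq_card_quotient_mul_card_subgroup (s := H₂)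
    rw [hcH₂] at this
    rw [← this, Nat.card_eq_fintype_card, hm₂]
  have hqeq : Nat.card (G₁ ⧸ H₁) = Nat.card (G₂ ⧸ H₂) :=
    Nat.eq_of_mul_eq_mul_right hp.pos (by rw [hq₁, hq₂])
  have finH₁ : Finite (G₁ ⧸ H₁) := Quotient.finite _
  have finH₂ : Finite (G₂ ⧸ H₂) := Quotient.finite _
  haveI : Fintype (G₁ ⧸ H₁) := Fintype.ofFinite _
  haveI : Fintype (G₂ ⧸ H₂) := Fintype.ofFinite _
  have eQ : (G₁ ⧸ H₁) ≃ (G₂ ⧸ H₂) :=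
    Fintype.equivOfCardEq (by simpa [Nat.card_eq_fintype_card] using hqeq)
  have eH : H₁ ≃ H₂ :=
    Fintype.equivOfCardEq (by
      rw [← Nat.card_eq_fintype_card, ← Nat.card_eq_fintype_card, hcH₁, hcH₂])
  let q₁ : G₁ ≃ (G₁ ⧸ H₁) × H₁ := Subgroup.groupEquivQuotientProdSubgroup
  let q₂ : G₂ ≃ (G₂ ⧸ H₂) × H₂ := Subgroup.groupEquivQuotientProdSubgroup
  let η : G₁ ≃ G₂ :=
    ((((Equiv.inv G₁).trans q₁).trans (Equiv.prodCongr eQ eH)).trans q₂.symm).trans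
      (Equiv.inv G₂)
  have hfst₁ : ∀ x : G₁, (q₁ x).1 = QuotientGroup.mk x := fun _ => rfl
  have hfst₂ : ∀ x : G₂, (q₂ x).1 = QuotientGroup.mk x := fun _ => rfl
  have hηval : ∀ x : G₁, η x = (q₂.symm (eQ (q₁ x⁻¹).1, eH (q₁ x⁻¹).2))⁻¹ := fun _ => rfl
  have key : ∀ x y : G₁, (η x) * (η y)⁻¹ ∈ H₂ ↔ x * y⁻¹ ∈ H₁ := by
    intro x y
    rw [hηval, hηval]
    set a := q₂.symm (eQ (q₁ x⁻¹).1, eH (q₁ x⁻¹).2) with ha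
    set b := q₂.symm (eQ (q₁ y⁻¹).1, eH (q₁ y⁻¹).2) with hb
    have hma : (QuotientGroup.mk a : G₂ ⧸ H₂) = eQ (q₁ x⁻¹).1 := by
      rw [← hfst₂ a, ha, Equiv.apply_symm_apply]
    have hmb : (QuotientGroup.mk b : G₂ ⧸ H₂) = eQ (q₁ y⁻¹).1 := by
      rw [← hfst₂ b, hb, Equiv.apply_symm_apply]
    have : a⁻¹ * b⁻¹⁻¹ ∈ H₂ ↔ a⁻¹ * b ∈ H₂ := by rw [inv_inv]
    rw [this, ← QuotientGroup.eq, hma, hmb, eQ.apply_eq_iff_eq, hfst₁, hfst₁,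
      QuotientGroup.eq, inv_inv]
  refine ⟨subgroupDist H₁, subgroupDist H₂, η, subgroupDist_isMetric H₁,
    subgroupDist_isMetric H₂, ?_, ?_, ?_⟩
  · intro x y
    unfold subgroupDist
    rw [key x y, η.apply_eq_iff_eq]
  · -- H₁ is proper
    have : ∃ a : G₁, a ∉ H₁ := by
      by_contra h
      push_neg at h
      have : H₁ = ⊤ := Subgroup.eq_top_iff' H₁ |>.mpr h
      have : Nat.card H₁ = m := by
        rw [this, Subgroup.card_top, Nat.card_eq_fintype_card, hm₁]
      omega
    obtain ⟨a, ha⟩ := this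
    refine ⟨a, 1, fun h => ha (h ▸ H₁.one_mem), ?_⟩
    unfold subgroupDist
    have h1 : a ≠ 1 := fun h => ha (h ▸ H₁.one_mem)
    have h2 : a * 1⁻¹ ∉ H₁ := by simpa using ha
    rw [if_neg h1, if_neg h2]
  · have : ∃ a : G₂, a ∉ H₂ := by
      by_contra h
      push_neg at h
      have : H₂ = ⊤ := Subgroup.eq_top_iff' H₂ |>.mpr h
      have : Nat.card H₂ = m := by
        rw [this, Subgroup.card_top, Nat.card_eq_fintype_card, hm₂]
      omega
    obtain ⟨a, ha⟩ := this
    refine ⟨a, 1, fun h => ha (h ▸ H₂.one_mem), ?_⟩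
    unfold subgroupDist
    have h1 : a ≠ 1 := fun h => ha (h ▸ H₂.one_mem)
    have h2 : a * 1⁻¹ ∉ H₂ := by simpa using ha
    rw [if_neg h1, if_neg h2]
end

section
/- Let G be a finite group, n ≥ 1, and H : Fin (n+1) → Subgroup G a monotone family of subgroups with H 0 = ⊥ and H n = ⊤ which is geometric, meaning |H i| = |H 1|^i for every i, with H 1 ≠ ⊥. Then there exists a bijection φ : G → (Fin n → H 1) such that d_RT(φ(x), φ(y)) = d_C(x, y) for all x, y ∈ G; i.e. (G, d_C) is isometric to ((H 1)^n, d_RT). -/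
/-- The chain weight of `x` with respect to a chain of subgroups
`H : Fin (n+1) → Subgroup G`: the least index `i` with `x ∈ H i`. -/
noncomputable def chainWeight {G : Type*} [Group G] {n : ℕ}
    (H : Fin (n + 1) → Subgroup G) (x : G) : ℕ :=
  sInf {i : ℕ | ∃ hi : i < n + 1, x ∈ H ⟨i, hi⟩}

/-- The chain distance associated to a chain of subgroups:
`d_C(x, y) = w_C(x * y⁻¹)`. -/
noncomputable def chainDist {G : Type*} [Group G] {n : ℕ}
    (H : Fin (n + 1) → Subgroup G) (x y : G) : ℕ :=
  chainWeight H (x * y⁻¹)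

/-!
Writing `G ⧸ H i ≃ G ⧸ H (i+1) × H (i+1) ⧸ H i` layer by layer, every `x` gets one coordinate per
layer `H (i+1) ⧸ H i`, namely the class of `x⁻¹` there. For `x * y⁻¹ ∈ H (i+1)`, one has
`x * y⁻¹ ∈ H i` exactly when `x` and `y` have the same coordinate in layer `i`. By downward
induction, `x * y⁻¹ ∈ H i` iff all coordinates of index `≥ i` agree, which says that the chain
distance is the Rosenbloom–Tsfasman distance of the coordinate vectors. In a geometric chain every
layer has `|H 1|` elements, so the coordinates may be taken in `H 1`, and `|G| = |H 1| ^ n` makes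
the coordinate map bijective once it is injective.
-/

open Function

theorem Fin.iff_forall_le_castSucc {n : ℕ} {P : Fin (n + 1) → Prop} {Q : Fin n → Prop}
    (hlast : P (Fin.last n)) (hstep : ∀ j : Fin n, P j.castSucc ↔ P j.succ ∧ Q j)
    (i : Fin (n + 1)) : P i ↔ ∀ j : Fin n, i ≤ j.castSucc → Q j := by
  induction i using Fin.reverseInduction with
  | last => exact iff_of_true hlast fun j hj => absurd hj (Fin.castSucc_lt_last j).not_ge
  | cast j ih =>
    rw [hstep, ih]
    constructor
    · rintro ⟨hlater, hj⟩ k hk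
      rcases (Fin.castSucc_le_castSucc_iff.mp hk).eq_or_lt with rfl | hlt
      · exact hj
      · exact hlater k (Fin.succ_le_castSucc_iff.mpr hlt)
    · intro h
      exact ⟨fun k hk => h k ((Fin.castSucc_le_succ j).trans hk), h j le_rfl⟩

theorem rtDist_le_iff {A : Type*} {n : ℕ} (a b : Fin n → A) (m : ℕ) :
    rtDist a b ≤ m ↔ ∀ j : Fin n, m ≤ j → a j = b j := by
  have hbdd : BddAbove {i : ℕ | ∃ j : Fin n, a j ≠ b j ∧ i = (j : ℕ) + 1} :=
    ⟨n, by rintro _ ⟨j, -, rfl⟩; exact j.isLt⟩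
  rw [rtDist, csSup_le_iff' hbdd]
  constructor
  · intro h j hj
    by_contra hne
    have := h _ ⟨j, hne, rfl⟩
    omega
  · rintro h _ ⟨j, hne, rfl⟩
    by_contra hlt
    exact hne (h j (by omega))

theorem rtDist_self {A : Type*} {n : ℕ} (a : Fin n → A) : rtDist a a = 0 :=
  Nat.le_zero.mp ((rtDist_le_iff a a 0).mpr fun _ _ => rfl)

namespace Subgroup

variable {G : Type*} [Group G] {K L : Subgroup G}

theorem card_mul_relIndex (h : K ≤ L) : Nat.card K * K.relIndex L = Nat.card L := by
  rw [← Nat.card_congr (subgroupOfEquivOfLe h).toEquiv]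
  exact (K.subgroupOf L).card_mul_index

theorem relIndex_eq_of_card_eq_pow [Finite L] {q i : ℕ} (h : K ≤ L) (hK : Nat.card K = q ^ i)
    (hL : Nat.card L = q ^ (i + 1)) : K.relIndex L = q := by
  have hq : q ≠ 0 := by
    rintro rfl
    exact Nat.card_pos.ne' (hL.trans (zero_pow i.succ_ne_zero))
  have := card_mul_relIndex h
  rw [hK, hL, pow_succ] at this
  exact Nat.eq_of_mul_eq_mul_left (pow_pos (Nat.pos_of_ne_zero hq) i) this

/-- The inverse turns the left cosets of `quotientEquivProdOfLE` into the relation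
`x * y⁻¹ ∈ K` used by the chain distance. -/
noncomputable def layerCoord (h : K ≤ L) (x : G) : L ⧸ K.subgroupOf L :=
  (quotientEquivProdOfLE h ((x⁻¹ : G) : G ⧸ K)).2

theorem mul_inv_mem_iff_layerCoord_eq (h : K ≤ L) (x y : G) :
    x * y⁻¹ ∈ K ↔ x * y⁻¹ ∈ L ∧ layerCoord h x = layerCoord h y := by
  have hmk : ∀ M : Subgroup G, ((x⁻¹ : G) : G ⧸ M) = (y⁻¹ : G) ↔ x * y⁻¹ ∈ M := fun M => by
    rw [QuotientGroup.eq, inv_inv]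
  rw [← hmk, ← hmk, ← (quotientEquivProdOfLE h).injective.eq_iff, Prod.ext_iff]
  rfl

end Subgroup

section Chain

variable {G : Type*} [Group G] {n : ℕ} {H : Fin (n + 1) → Subgroup G}

theorem chainWeight_le_iff (hmono : Monotone H) (htop : H (Fin.last n) = ⊤) (x : G)
    (i : Fin (n + 1)) : chainWeight H x ≤ i ↔ x ∈ H i := by
  constructor
  · intro h
    obtain ⟨hk, hx⟩ := Nat.sInf_mem (s := {i : ℕ | ∃ hi : i < n + 1, x ∈ H ⟨i, hi⟩})
      ⟨n, n.lt_succ_self, htop ▸ Subgroup.mem_top x⟩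
    exact hmono (Fin.mk_le_of_le_val h) hx
  · intro hx
    exact Nat.sInf_le ⟨i.isLt, hx⟩

theorem chainDist_eq_zero_iff (hmono : Monotone H) (hbot : H 0 = ⊥) (htop : H (Fin.last n) = ⊤)
    (x y : G) : chainDist H x y = 0 ↔ x = y := by
  rw [← Nat.le_zero, chainDist, ← Fin.val_zero (n + 1), chainWeight_le_iff hmono htop, hbot,
    Subgroup.mem_bot, mul_inv_eq_one]

theorem rtDist_eq_chainDist_of_coords (hmono : Monotone H) (htop : H (Fin.last n) = ⊤) {A : Type*}
    (f : Fin n → G → A)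
    (hf : ∀ j x y, x * y⁻¹ ∈ H j.castSucc ↔ x * y⁻¹ ∈ H j.succ ∧ f j x = f j y) (x y : G) :
    rtDist (fun j => f j x) (fun j => f j y) = chainDist H x y := by
  have key : ∀ i : Fin (n + 1),
      chainDist H x y ≤ i ↔ rtDist (fun j => f j x) (fun j => f j y) ≤ i := fun i => by
    rw [chainDist, chainWeight_le_iff hmono htop, rtDist_le_iff,
      Fin.iff_forall_le_castSucc (P := fun i => x * y⁻¹ ∈ H i) (by simp [htop])
        (fun j => hf j x y)]
    rfl
  have hcd : chainDist H x y < n + 1 :=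
    Nat.lt_succ_of_le ((chainWeight_le_iff hmono htop _ (Fin.last n)).mpr (htop ▸ trivial))
  have hrt : rtDist (fun j => f j x) (fun j => f j y) < n + 1 :=
    Nat.lt_succ_of_le ((rtDist_le_iff _ _ n).mpr fun j hj => absurd j.isLt (by omega))
  exact le_antisymm ((key ⟨_, hcd⟩).mp le_rfl) ((key ⟨_, hrt⟩).mpr le_rfl)

theorem relIndex_castSucc_succ_of_geometric [Finite G] (hmono : Monotone H)
    (hgeo : ∀ i : Fin (n + 1), Nat.card (H i) = Nat.card (H 1) ^ (i : ℕ)) (j : Fin n) :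
    (H j.castSucc).relIndex (H j.succ) = Nat.card (H 1) :=
  Subgroup.relIndex_eq_of_card_eq_pow (hmono j.castSucc_le_succ) (hgeo j.castSucc) (hgeo j.succ)

end Chain

theorem stmt_17_general {G : Type*} [Group G] [Fintype G] (n : ℕ)
    (H : Fin (n + 1) → Subgroup G) (hmono : Monotone H)
    (hbot : H 0 = ⊥) (htop : H (Fin.last n) = ⊤)
    (hgeo : ∀ i : Fin (n + 1), Nat.card (H i) = Nat.card (H 1) ^ (i : ℕ)) :
    ∃ φ : G ≃ (Fin n → (H 1)),
      ∀ x y : G, rtDist (φ x) (φ y) = chainDist H x y := by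
  have hle : ∀ j : Fin n, H j.castSucc ≤ H j.succ := fun j => hmono j.castSucc_le_succ
  have ι : ∀ j : Fin n, H j.succ ⧸ (H j.castSucc).subgroupOf (H j.succ) ≃ H 1 := fun j =>
    (Finite.card_eq.mp (relIndex_castSucc_succ_of_geometric hmono hgeo j)).some
  let φ : G → Fin n → H 1 := fun x j => ι j (Subgroup.layerCoord (hle j) x)
  have hφ : ∀ x y, rtDist (φ x) (φ y) = chainDist H x y :=
    rtDist_eq_chainDist_of_coords hmono htop _ fun j x y => by
      rw [Subgroup.mul_inv_mem_iff_layerCoord_eq (hle j), (ι j).injective.eq_iff]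
  have hinj : Injective φ := fun x y hxy => by
    rw [← chainDist_eq_zero_iff hmono hbot htop, ← hφ, hxy, rtDist_self]
  have hcard : Nat.card G = Nat.card (Fin n → H 1) := by
    have hcardG := hgeo (Fin.last n)
    rw [htop, Subgroup.card_top, Fin.val_last] at hcardG
    rw [hcardG, Nat.card_fun, Nat.card_eq_fintype_card (α := Fin n), Fintype.card_fin]
  exact ⟨.ofBijective φ ((Nat.bijective_iff_injective_and_card φ).mpr ⟨hinj, hcard⟩), hφ⟩

/-- A finite group `G` with a geometric chain of subgroups
(`|H i| = |H 1|^i` for all `i`, `H 1 ≠ ⊥`) is isometric to `(H 1)^n` with the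
Rosenbloom–Tsfasman metric. -/
theorem stmt_17 {G : Type*} [Group G] [Fintype G] (n : ℕ) (hn : 1 ≤ n)
    (H : Fin (n + 1) → Subgroup G) (hmono : Monotone H)
    (hbot : H 0 = ⊥) (htop : H (Fin.last n) = ⊤)
    (hgeo : ∀ i : Fin (n + 1), Nat.card (H i) = Nat.card (H 1) ^ (i : ℕ))
    (hne : H 1 ≠ ⊥) :
    ∃ φ : G ≃ (Fin n → (H 1)),
      ∀ x y : G, rtDist (φ x) (φ y) = chainDist H x y :=
  stmt_17_general n H hmono hbot htop hgeo
end

section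
/- Let q be a prime power, n ≥ 1, and let G and K be finite groups with |G| = q^n and |K| = q. Then there exist a monotone family of subgroups H : Fin (n+1) → Subgroup G with |H i| = q^i for every i (so H 0 = ⊥ and H n = ⊤), and a bijection φ : G → (Fin n → K) such that d_RT(φ(x), φ(y)) = d_C(x, y) for all x, y ∈ G, where d_C is the chain distance of this chain; i.e. (G, d_C) is isometric to (K^n, d_RT). -/
/-- Existence of a chain of subgroups of cardinalities `q ^ i` in a group
of cardinality `q ^ n`, where `q = p ^ r` is a prime power. -/
lemma exists_chain_aux {p r q : ℕ} (hp : p.Prime) (hq : p ^ r = q)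
    {G : Type*} [Group G] [Fintype G] {n : ℕ} (hG : Fintype.card G = q ^ n) :
    ∃ H : Fin (n + 1) → Subgroup G,
      Monotone H ∧ ∀ i : Fin (n + 1), Nat.card (H i) = q ^ (i : ℕ) := by
  haveI : Fact p.Prime := ⟨hp⟩
  have hcard : Nat.card G = p ^ (r * n) := by
    rw [Nat.card_eq_fintype_card, hG, ← hq, ← pow_mul]
  have ex : ∀ (i : ℕ), i < n → ∀ K : Subgroup G, Nat.card K = q ^ i →
      ∃ K' : Subgroup G, Nat.card K' = q ^ (i + 1) ∧ K ≤ K' := by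
    intro i hi K hKc
    have hdvd : p ^ (r * (i + 1)) ∣ Nat.card G := by
      rw [hcard]
      exact pow_dvd_pow p (Nat.mul_le_mul_left r hi)
    obtain ⟨K', h1, h2⟩ := Sylow.exists_subgroup_card_pow_prime_le p hdvd K
      (by rw [hKc, ← hq, ← pow_mul]) (Nat.mul_le_mul_left r (Nat.le_succ i))
    exact ⟨K', by rw [h1, ← hq, ← pow_mul], h2⟩
  let next : ℕ → Subgroup G → Subgroup G := fun i K =>
    if h : i < n ∧ Nat.card K = q ^ i then (ex i h.1 K h.2).choose else K
  have hnext_le : ∀ (i : ℕ) (K : Subgroup G), K ≤ next i K := by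
    intro i K
    show K ≤ dite _ _ _
    split
    · next h => exact (ex i h.1 K h.2).choose_spec.2
    · exact le_rfl
  have hnext_card : ∀ (i : ℕ) (K : Subgroup G), i < n → Nat.card K = q ^ i →
      Nat.card ↥(next i K) = q ^ (i + 1) := by
    intro i K hi hc
    have h' : next i K = (ex i hi K hc).choose := dif_pos ⟨hi, hc⟩
    rw [h']
    exact (ex i hi K hc).choose_spec.1
  let g : ℕ → Subgroup G := fun i => Nat.rec ⊥ next i
  have hgs : ∀ i, g (i + 1) = next i (g i) := fun _ => rfl
  have hgcard : ∀ i, i ≤ n → Nat.card ↥(g i) = q ^ i := by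
    intro i
    induction i with
    | zero => intro _; simp [g, Subgroup.card_bot]
    | succ i ih =>
      intro h
      have hi : i < n := h
      have hc := ih hi.le
      rw [hgs]
      exact hnext_card i (g i) hi hc
  have hstep : ∀ i, g i ≤ g (i + 1) := by
    intro i
    rw [hgs]
    exact hnext_le i (g i)
  have hmono : Monotone g := monotone_nat_of_le_succ hstep
  refine ⟨fun i => g i, fun a b hab => hmono hab, fun i => hgcard i (Nat.lt_succ_iff.mp i.isLt)⟩

/-- For a prime power `q` and finite groups `G`, `K` with
`|G| = q^n` and `|K| = q`, there is a chain of subgroups of `G` with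
`|H i| = q^i` (hence `H 0 = ⊥`, `H n = ⊤`) and a bijection `φ : G → K^n`
carrying the chain distance to the Rosenbloom–Tsfasman distance. -/
theorem stmt_18 (q : ℕ) (hq : IsPrimePow q) (n : ℕ) (hn : 1 ≤ n)
    {G K : Type*} [Group G] [Fintype G] [Group K] [Fintype K]
    (hG : Fintype.card G = q ^ n) (hK : Fintype.card K = q) :
    ∃ H : Fin (n + 1) → Subgroup G,
      Monotone H ∧
      (∀ i : Fin (n + 1), Nat.card (H i) = q ^ (i : ℕ)) ∧
      ∃ φ : G ≃ (Fin n → K),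
        ∀ x y : G, rtDist (φ x) (φ y) = chainDist H x y := by
  obtain ⟨p, r, hp, hr, hpr⟩ := hq
  rw [← Nat.prime_iff] at hp
  obtain ⟨H, hmono, hcards⟩ := exists_chain_aux hp hpr hG
  have hq0 : q ≠ 0 := by
    rw [← hpr]; exact pow_ne_zero _ hp.pos.ne'
  have hH0 : H 0 = ⊥ := Subgroup.card_eq_one.mp (by simpa using hcards 0)
  have hHlast : H (Fin.last n) = ⊤ := by
    apply Subgroup.eq_top_of_card_eq
    rw [hcards, Nat.card_eq_fintype_card, hG, Fin.val_last]
  -- the inclusion of consecutive subgroups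
  have hle : ∀ j : Fin n, H j.castSucc ≤ H j.succ := by
    intro j
    exact hmono (by simp [Fin.le_def])
  -- cardinality of consecutive quotients
  have hqcard : ∀ j : Fin n,
      Nat.card ((H j.succ) ⧸ (H j.castSucc).subgroupOf (H j.succ)) = q := by
    intro j
    have h1 := Subgroup.card_eq_card_quotient_mul_card_subgroup
      ((H j.castSucc).subgroupOf (H j.succ))
    have h2 : Nat.card ((H j.castSucc).subgroupOf (H j.succ)) = q ^ (j : ℕ) := by
      rw [Nat.card_congr (Subgroup.subgroupOfEquivOfLe (hle j)).toEquiv]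
      simpa using hcards j.castSucc
    rw [hcards j.succ, h2, Fin.val_succ, pow_succ'] at h1
    exact Nat.eq_of_mul_eq_mul_right (Nat.pos_of_ne_zero (pow_ne_zero _ hq0)) h1.symm
  -- an equivalence of each quotient with K
  have eK : ∀ j : Fin n,
      ((H j.succ) ⧸ (H j.castSucc).subgroupOf (H j.succ)) ≃ K := by
    intro j
    exact (Finite.card_eq.mp (by rw [hqcard j, Nat.card_eq_fintype_card, hK])).some
  let e : ∀ j : Fin n, (G ⧸ H j.castSucc) ≃ (G ⧸ H j.succ) × K := fun j =>
    (Subgroup.quotientEquivProdOfLE (hle j)).trans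
      (Equiv.prodCongr (Equiv.refl _) (eK j))
  have efst : ∀ (j : Fin n) (g : G),
      (e j ((g : G) : G ⧸ H j.castSucc)).1 = ((g : G) : G ⧸ H j.succ) := fun j g => rfl
  let φ₀ : G → Fin n → K := fun x j => (e j ((x⁻¹ : G) : G ⧸ H j.castSucc)).2
  -- membership in H i forces agreement of coordinates ≥ i
  have hagree : ∀ (i : Fin (n + 1)) (x y : G), x * y⁻¹ ∈ H i →
      ∀ j : Fin n, (i : ℕ) ≤ (j : ℕ) → φ₀ x j = φ₀ y j := by
    intro i x y hxy j hij
    have hle' : H i ≤ H j.castSucc := hmono (by simp [Fin.le_def, hij])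
    have hquot : ((x⁻¹ : G) : G ⧸ H j.castSucc) = ((y⁻¹ : G) : G ⧸ H j.castSucc) := by
      rw [QuotientGroup.eq]
      simpa using hle' hxy
    simp only [φ₀, hquot]
  -- agreement of coordinates ≥ i forces membership in H i
  have hsep : ∀ (k : ℕ) (i : Fin (n + 1)), n ≤ (i : ℕ) + k → ∀ x y : G,
      (∀ j : Fin n, (i : ℕ) ≤ (j : ℕ) → φ₀ x j = φ₀ y j) → x * y⁻¹ ∈ H i := by
    intro k
    induction k with
    | zero =>
      intro i hi x y _
      have : i = Fin.last n :=
        Fin.ext (le_antisymm (Nat.lt_succ_iff.mp i.isLt) (by simpa using hi))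
      rw [this, hHlast]
      trivial
    | succ k ih =>
      intro i hi x y hxy
      by_cases h : (i : ℕ) < n
      · set j : Fin n := ⟨(i : ℕ), h⟩ with hj
        have hci : j.castSucc = i := Fin.ext (by simp [hj])
        have hsuc : x * y⁻¹ ∈ H j.succ := by
          apply ih j.succ (by simp [hj]; omega) x y
          intro j' hj'
          apply hxy j'
          simp only [Fin.val_succ, hj] at hj'
          omega
        have hq2 : ((x⁻¹ : G) : G ⧸ H j.succ) = ((y⁻¹ : G) : G ⧸ H j.succ) := by
          rw [QuotientGroup.eq]
          simpa using hsuc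
        have hq1 : ((x⁻¹ : G) : G ⧸ H j.castSucc) = ((y⁻¹ : G) : G ⧸ H j.castSucc) := by
          apply (e j).injective
          refine Prod.ext ?_ ?_
          · rw [efst, efst, hq2]
          · exact hxy j (by simp [hj])
        have hmem := (QuotientGroup.eq).mp hq1
        rw [hci] at hmem
        simpa using hmem
      · have : i = Fin.last n :=
          Fin.ext (le_antisymm (Nat.lt_succ_iff.mp i.isLt) (by omega))
        rw [this, hHlast]
        trivial
  -- φ₀ is injective, hence bijective
  have hinj : Function.Injective φ₀ := by
    intro x y hxy
    have := hsep n 0 (by simp) x y (fun j _ => congrFun hxy j)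
    rw [hH0, Subgroup.mem_bot, mul_inv_eq_one] at this
    exact this
  have hbij : Function.Bijective φ₀ := by
    rw [Fintype.bijective_iff_injective_and_card]
    refine ⟨hinj, ?_⟩
    rw [hG, Fintype.card_fun, hK, Fintype.card_fin]
  refine ⟨H, hmono, hcards, Equiv.ofBijective φ₀ hbij, ?_⟩
  intro x y
  show rtDist (φ₀ x) (φ₀ y) = chainDist H x y
  simp only [rtDist, chainDist, chainWeight]
  by_cases hxy : x = y
  · subst hxy
    have hs : {i : ℕ | ∃ j : Fin n, φ₀ x j ≠ φ₀ x j ∧ i = (j : ℕ) + 1} = ∅ := by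
      ext i; simp
    rw [hs, csSup_empty]
    symm
    apply Nat.sInf_eq_zero.mpr
    exact Or.inl ⟨Nat.succ_pos n, by simpa using (H 0).one_mem⟩
  · set S : Set ℕ := {i : ℕ | ∃ hi : i < n + 1, x * y⁻¹ ∈ H ⟨i, hi⟩} with hS
    have hmemn : n ∈ S := by
      refine ⟨Nat.lt_succ_self n, ?_⟩
      have : (⟨n, Nat.lt_succ_self n⟩ : Fin (n + 1)) = Fin.last n := rfl
      rw [this, hHlast]
      trivial
    set m := sInf S with hm
    have hmS : m ∈ S := Nat.sInf_mem ⟨n, hmemn⟩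
    have hmn : m ≤ n := Nat.sInf_le hmemn
    obtain ⟨hmlt, hmmem⟩ := hmS
    have hm1 : 1 ≤ m := by
      rcases Nat.eq_zero_or_pos m with h0 | h1
      · exfalso
        have h0' : (⟨m, hmlt⟩ : Fin (n + 1)) = 0 := by
          ext; simp [h0]
        rw [h0', hH0, Subgroup.mem_bot, mul_inv_eq_one] at hmmem
        exact hxy hmmem
      · exact h1
    have hup : ∀ j : Fin n, m ≤ (j : ℕ) → φ₀ x j = φ₀ y j := by
      intro j hj
      exact hagree ⟨m, hmlt⟩ x y hmmem j hj
    have hd : φ₀ x ⟨m - 1, by omega⟩ ≠ φ₀ y ⟨m - 1, by omega⟩ := by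
      intro hEq
      have hmem : x * y⁻¹ ∈ H ⟨m - 1, by omega⟩ := by
        apply hsep n ⟨m - 1, by omega⟩ (by simp) x y
        intro j hj
        rcases Nat.lt_or_ge (j : ℕ) m with hlt | hge
        · have : j = (⟨m - 1, by omega⟩ : Fin n) := by
            ext; simp only [] at hj ⊢; omega
          rw [this]
          exact hEq
        · exact hup j hge
      have hmem' : m - 1 ∈ S := ⟨by omega, hmem⟩
      have := Nat.sInf_le hmem'
      omega
    set T : Set ℕ := {i : ℕ | ∃ j : Fin n, φ₀ x j ≠ φ₀ y j ∧ i = (j : ℕ) + 1} with hT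
    have hmT : m ∈ T := ⟨⟨m - 1, by omega⟩, hd, by simp; omega⟩
    have hub : ∀ s ∈ T, s ≤ m := by
      rintro s ⟨j, hne, rfl⟩
      by_contra hlt
      push_neg at hlt
      exact hne (hup j (by omega))
    exact le_antisymm (csSup_le ⟨m, hmT⟩ hub) (le_csSup ⟨m, hub⟩ hmT)
end

section
/- Let G be a finite group, n ≥ 1, and H : Fin (n+1) → Subgroup G a strictly monotone family of subgroups with H 0 = ⊥ and H n = ⊤, and suppose there is a function k : Fin (n+1) → ℕ such that |H i| = |H 1|^(k i) for every i (so k 0 = 0 and k 1 = 1), with H 1 ≠ ⊥. Then there exists a bijection φ : G → (Fin (k n) → H 1) such that for all x, y ∈ G the chain distance equals the block Rosenbloom–Tsfasman distance: d_C(x, y) = d_BRT(φ(x), φ(y)), where d_BRT is taken with respect to the partition of the k n coordinates into the n consecutive blocks {k(i−1), …, k(i) − 1} for i = 1, …, n; i.e. (G, d_C) is isometric to ((H 1)^(k n), d_BRT). -/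
/-- The block Rosenbloom–Tsfasman distance on `Fin N → A`, with respect to the
partition of the coordinates `{0, …, N-1}` into the consecutive blocks
`B_i = {k (i-1), …, k i - 1}` for `i = 1, …, n`: it is `0` if the tuples are
equal, and otherwise the largest block index `i` such that the tuples differ
at some coordinate of block `B_i`. -/
noncomputable def brtDist {A : Type*} {n N : ℕ} (k : Fin (n + 1) → ℕ)
    (a b : Fin N → A) : ℕ :=
  sSup {m : ℕ | ∃ i : Fin (n + 1), (i : ℕ) = m ∧ i ≠ 0 ∧
    ∃ j : Fin N, a j ≠ b j ∧ k (i - 1) ≤ (j : ℕ) ∧ (j : ℕ) < k i}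


/-!
Since `[H (i+1) : H i] = |H 1| ^ (k (i+1) - k i)`, the cosets of `H i` inside one coset of
`H (i+1)` can be labelled injectively by words in `(H 1) ^ (k (i+1) - k i)`. Writing the label
of level `i` into the block of coordinates `[k i, k (i+1))` gives a map `ψ : G → (H 1) ^ (k n)`
such that `u⁻¹ * v ∈ H i` exactly when `ψ u` and `ψ v` agree from coordinate `k i` on; it is a
bijection by counting. For `φ x = ψ x⁻¹` the least `i` with `x * y⁻¹ ∈ H i` is then the index of
the last block on which `φ x` and `φ y` differ.
-/

theorem Subgroup.exists_code_of_card_le {G B : Type*} [Group G] [Finite G] [Finite B]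
    {H₀ H₁ : Subgroup G} (hle : H₀ ≤ H₁) (hB : Nat.card H₁ ≤ Nat.card H₀ * Nat.card B) :
    ∃ c : G → B, ∀ u v : G, u⁻¹ * v ∈ H₁ → (c u = c v ↔ u⁻¹ * v ∈ H₀) := by
  have : Fintype B := Fintype.ofFinite B
  have : Fintype (H₁ ⧸ H₀.subgroupOf H₁) := Fintype.ofFinite _
  have hindex : Nat.card H₀ * H₀.relIndex H₁ = Nat.card H₁ := by
    rw [← (H₀.subgroupOf H₁).card_mul_index,
      Nat.card_congr (Subgroup.subgroupOfEquivOfLe hle).toEquiv, Subgroup.relIndex]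
  obtain ⟨ι⟩ : Nonempty (H₁ ⧸ H₀.subgroupOf H₁ ↪ B) := by
    apply Function.Embedding.nonempty_of_card_le
    simp only [← Nat.card_eq_fintype_card]
    exact Nat.le_of_mul_le_mul_left (hindex ▸ hB) Nat.card_pos
  set e := Subgroup.quotientEquivProdOfLE hle
  refine ⟨fun g => ι (e g).2, fun u v huv => ?_⟩
  have hfst : (e u).1 = (e v).1 := QuotientGroup.eq.mpr huv
  rw [ι.injective.eq_iff, ← QuotientGroup.eq, ← e.injective.eq_iff, Prod.ext_iff]
  exact ⟨fun h => ⟨hfst, h⟩, And.right⟩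

theorem extend_val_Ico_of_le {A : Type*} {a b j : ℕ} (hj : b ≤ j) (g : Set.Ico a b → A)
    (f : ℕ → A) : Function.extend Subtype.val g f j = f j :=
  Function.extend_apply' g f j fun ⟨x, hx⟩ => (hx ▸ x.2.2).not_ge hj

theorem forall_le_extend_val_Ico_eq_iff {A : Type*} {a b : ℕ} (hab : a ≤ b)
    (c c' : Set.Ico a b → A) (f f' : ℕ → A) :
    (∀ j, a ≤ j → Function.extend Subtype.val c f j = Function.extend Subtype.val c' f' j) ↔
      c = c' ∧ ∀ j, b ≤ j → f j = f' j := by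
  have h_in (j : Set.Ico a b) (g : Set.Ico a b → A) (f : ℕ → A) :
      Function.extend Subtype.val g f j = g j := Subtype.val_injective.extend_apply g f j
  constructor
  · intro h
    refine ⟨funext fun x => ?_, fun j hj => ?_⟩
    · simpa only [h_in] using h x x.2.1
    · simpa only [extend_val_Ico_of_le hj] using h j (hab.trans hj)
  · rintro ⟨rfl, h⟩ j hj
    rcases lt_or_ge j b with hjb | hjb
    · exact (h_in ⟨j, hj, hjb⟩ c f).trans (h_in ⟨j, hj, hjb⟩ c f').symm
    · rw [extend_val_Ico_of_le hjb, extend_val_Ico_of_le hjb, h j hjb]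

theorem Nat.card_Ico_fun (A : Type*) (a b : ℕ) :
    Nat.card (Set.Ico a b → A) = Nat.card A ^ (b - a) := by
  rw [Nat.card_fun, Nat.card_coe_set_eq, Set.ncard_Ico_nat]

section ChainCode

variable {G A : Type*} [Group G] [Finite G] {n : ℕ} {H : Fin (n + 1) → Subgroup G}
  {k : Fin (n + 1) → ℕ}

theorem exists_forall_mem_iff_forall_le_eq [Finite A] [Nonempty A] (hH : Monotone H)
    (htop : H (Fin.last n) = ⊤) (hk : Monotone k)
    (hcard : ∀ i : Fin n, Nat.card (H i.succ) ≤
      Nat.card (H i.castSucc) * Nat.card A ^ (k i.succ - k i.castSucc)) :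
    ∃ F : G → ℕ → A, ∀ i u v, u⁻¹ * v ∈ H i ↔ ∀ j, k i ≤ j → F u j = F v j := by
  suffices h : ∀ m, ∃ F : G → ℕ → A, ∀ i, m ≤ i → ∀ u v,
      u⁻¹ * v ∈ H i ↔ ∀ j, k i ≤ j → F u j = F v j by
    obtain ⟨F, hF⟩ := h 0
    exact ⟨F, fun i => hF i (Fin.zero_le i)⟩
  intro m
  induction m using Fin.reverseInduction with
  | last =>
    obtain ⟨a⟩ := ‹Nonempty A›
    refine ⟨fun _ _ => a, fun i hi u v => ?_⟩
    rw [le_antisymm (Fin.le_last i) hi, htop]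
    simp
  | cast m ih =>
    obtain ⟨F, hF⟩ := ih
    have hHm : H m.castSucc ≤ H m.succ := hH m.castSucc_le_succ
    have hkm : k m.castSucc ≤ k m.succ := hk m.castSucc_le_succ
    obtain ⟨c, hc⟩ := Subgroup.exists_code_of_card_le hHm
      (B := Set.Ico (k m.castSucc) (k m.succ) → A) (by rw [Nat.card_Ico_fun]; exact hcard m)
    refine ⟨fun u => Function.extend Subtype.val (c u) (F u), fun i hi u v => ?_⟩
    rcases hi.eq_or_lt with rfl | hlt
    · rw [forall_le_extend_val_Ico_eq_iff hkm, ← hF m.succ le_rfl]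
      exact ⟨fun h => ⟨(hc u v (hHm h)).2 h, hHm h⟩,
        fun ⟨hcuv, h⟩ => (hc u v h).1 hcuv⟩
    · have hmi : m.succ ≤ i := Fin.castSucc_lt_iff_succ_le.mp hlt
      have hki : k m.succ ≤ k i := hk hmi
      rw [hF i hmi]
      refine forall₂_congr fun j hj => ?_
      simp only [extend_val_Ico_of_le (hki.trans hj)]

theorem exists_equiv_forall_mul_inv_mem_iff [Finite A] [Nonempty A] (hH : Monotone H)
    (hbot : H 0 = ⊥) (htop : H (Fin.last n) = ⊤) (hk : Monotone k)
    (hcard : ∀ i : Fin n, Nat.card (H i.succ) ≤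
      Nat.card (H i.castSucc) * Nat.card A ^ (k i.succ - k i.castSucc))
    (hG : Nat.card G = Nat.card A ^ k (Fin.last n)) :
    ∃ φ : G ≃ (Fin (k (Fin.last n)) → A), ∀ i x y,
      x * y⁻¹ ∈ H i ↔ ∀ j : Fin (k (Fin.last n)), k i ≤ j → φ x j = φ y j := by
  obtain ⟨F, hF⟩ := exists_forall_mem_iff_forall_le_eq hH htop hk hcard
  set ψ : G → Fin (k (Fin.last n)) → A := fun u j => F u j
  -- beyond `k (Fin.last n)` the tails agree because `H (Fin.last n) = ⊤`
  have hψ : ∀ i u v, u⁻¹ * v ∈ H i ↔ ∀ j : Fin (k (Fin.last n)), k i ≤ j → ψ u j = ψ v j := by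
    intro i u v
    rw [hF]
    refine ⟨fun h j hj => h j hj, fun h j hj => ?_⟩
    rcases lt_or_ge j (k (Fin.last n)) with hjK | hjK
    · exact h ⟨j, hjK⟩ hj
    · exact (hF (Fin.last n) u v).1 (htop ▸ Subgroup.mem_top _) j hjK
  have hinj : Function.Injective ψ := fun u v huv => by
    have h := (hψ 0 u v).2 fun j _ => congrFun huv j
    rwa [hbot, Subgroup.mem_bot, inv_mul_eq_one] at h
  have hbij : Function.Bijective ψ := by
    rw [Nat.bijective_iff_injective_and_card, Nat.card_fun, Nat.card_fin]
    exact ⟨hinj, hG⟩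
  refine ⟨(Equiv.inv G).trans (Equiv.ofBijective ψ hbij), fun i x y => ?_⟩
  have h := hψ i x⁻¹ y⁻¹
  rw [inv_inv] at h
  exact h

end ChainCode

theorem brtDist_eq_sInf {A : Type*} {n N : ℕ} {k : Fin (n + 1) → ℕ} (hk : Monotone k)
    (hN : N ≤ k (Fin.last n)) (a b : Fin N → A) :
    brtDist k a b = sInf {i : ℕ | ∃ hi : i < n + 1, ∀ j : Fin N, k ⟨i, hi⟩ ≤ j → a j = b j} := by
  set S := {i : ℕ | ∃ hi : i < n + 1, ∀ j : Fin N, k ⟨i, hi⟩ ≤ j → a j = b j}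
  have hS : S.Nonempty := ⟨n, n.lt_succ_self, fun j hj => absurd (j.2.trans_le hN) hj.not_gt⟩
  obtain ⟨hw, hwS⟩ := Nat.sInf_mem hS
  set w := sInf S
  have hub : w ∈ upperBounds {m : ℕ | ∃ i : Fin (n + 1), (i : ℕ) = m ∧ i ≠ 0 ∧
      ∃ j : Fin N, a j ≠ b j ∧ k (i - 1) ≤ (j : ℕ) ∧ (j : ℕ) < k i} := by
    rintro _ ⟨i, rfl, hi0, j, hne, hj, -⟩
    by_contra! hwi
    refine hne (hwS j ((hk ?_).trans hj))
    have hi : (i : ℕ) ≠ 0 := Fin.val_ne_zero_iff.mpr hi0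
    rw [Fin.le_def, Fin.coe_sub_one, if_neg hi0, Fin.val_mk]
    omega
  refine le_antisymm (csSup_le' hub) ?_
  rcases Nat.eq_zero_or_pos w with hw0 | hw0
  · exact hw0 ▸ Nat.zero_le _
  · have hw1 : w - 1 < n + 1 := by omega
    have hw1S : w - 1 ∉ S := Nat.notMem_of_lt_sInf (Nat.sub_one_lt_of_lt hw0)
    obtain ⟨j, hj, hne⟩ : ∃ j : Fin N, k ⟨w - 1, hw1⟩ ≤ j ∧ a j ≠ b j := by
      by_contra! h
      exact hw1S ⟨hw1, h⟩
    have hi0 : (⟨w, hw⟩ : Fin (n + 1)) ≠ 0 := Fin.ne_of_val_ne hw0.ne'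
    have hi1 : (⟨w, hw⟩ - 1 : Fin (n + 1)) = ⟨w - 1, hw1⟩ := by
      rw [Fin.ext_iff, Fin.coe_sub_one, if_neg hi0]
    refine le_csSup ⟨w, hub⟩ ⟨⟨w, hw⟩, rfl, hi0, j, hne, hi1 ▸ hj, ?_⟩
    by_contra! hjw
    exact hne (hwS j hjw)

theorem stmt_19_general {G : Type*} [Group G] [Fintype G] (n : ℕ)
    (H : Fin (n + 1) → Subgroup G) (hmono : StrictMono H)
    (hbot : H 0 = ⊥) (htop : H (Fin.last n) = ⊤)
    (k : Fin (n + 1) → ℕ)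
    (hk : ∀ i : Fin (n + 1), Nat.card (H i) = Nat.card (H 1) ^ k i)
    (hne : H 1 ≠ ⊥) :
    ∃ φ : G ≃ (Fin (k (Fin.last n)) → (H 1)),
      ∀ x y : G, chainDist H x y = brtDist k (φ x) (φ y) := by
  have hq : 1 < Nat.card (H 1) := (Subgroup.one_lt_card_iff_ne_bot _).mpr hne
  have hk_mono : Monotone k := fun i i' hii' => by
    rw [← Nat.pow_le_pow_iff_right hq, ← hk, ← hk]
    exact Subgroup.card_le_of_le (hmono.monotone hii')
  have hcard (i : Fin n) : Nat.card (H i.succ) ≤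
      Nat.card (H i.castSucc) * Nat.card (H 1) ^ (k i.succ - k i.castSucc) := by
    rw [hk i.succ, hk i.castSucc, ← pow_add, Nat.add_sub_cancel' (hk_mono i.castSucc_le_succ)]
  have hG : Nat.card G = Nat.card (H 1) ^ k (Fin.last n) := by
    rw [← hk, htop, Subgroup.card_top]
  obtain ⟨φ, hφ⟩ :=
    exists_equiv_forall_mul_inv_mem_iff hmono.monotone hbot htop hk_mono hcard hG
  refine ⟨φ, fun x y => ?_⟩
  rw [brtDist_eq_sInf hk_mono le_rfl, chainDist, chainWeight]
  simp only [hφ]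

/-- Let `G` be a finite group with a strictly increasing chain of
subgroups `⊥ = H 0 < H 1 < ⋯ < H n = ⊤` such that `|H i| = |H 1|^(k i)` for
some `k : Fin (n+1) → ℕ` (so `k 0 = 0`, `k 1 = 1`), with `H 1 ≠ ⊥`. Then
`(G, d_C)` is isometric to `(H 1)^(k n)` with the block Rosenbloom–Tsfasman
distance whose blocks are `{k (i-1), …, k i - 1}` for `i = 1, …, n`. -/
theorem stmt_19 {G : Type*} [Group G] [Fintype G] (n : ℕ) (hn : 1 ≤ n)
    (H : Fin (n + 1) → Subgroup G) (hmono : StrictMono H)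
    (hbot : H 0 = ⊥) (htop : H (Fin.last n) = ⊤)
    (k : Fin (n + 1) → ℕ)
    (hk : ∀ i : Fin (n + 1), Nat.card (H i) = Nat.card (H 1) ^ k i)
    (hne : H 1 ≠ ⊥) :
    ∃ φ : G ≃ (Fin (k (Fin.last n)) → (H 1)),
      ∀ x y : G, chainDist H x y = brtDist k (φ x) (φ y) :=
  stmt_19_general n H hmono hbot htop k hk hne
end
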